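/- arXiv:1607.01262 — 6 statements merged into one kernel-verified Lean document; each statement's English description precedes it below -/
import Mathlib

section
/- Let 𝒟 be a triangulated category, let 𝒜 ⊆ 𝒟 be the heart of a bounded t-structure, and let (ℱ, 𝒯) be a torsion pair on 𝒜. Then the tilt 𝒜♯ = ⟨ℱ[1], 𝒯⟩, i.e., the strictly full subcategory of objects E ∈ 𝒟 admitting a distinguished triangle F[1] → E → T → F[2] with F ∈ ℱ and T ∈ 𝒯, is again the heart of a bounded t-structure on 𝒟. -/
open CategoryTheory CategoryTheory.Limits CategoryTheory.Pretriangulated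

namespace BridgelandNotes

open ZeroObject

variable {𝒟 : Type*} [Category 𝒟] [HasZeroObject 𝒟] [HasShift 𝒟 ℤ]
  [Preadditive 𝒟] [∀ n : ℤ, (CategoryTheory.shiftFunctor 𝒟 n).Additive]
  [Pretriangulated 𝒟]

/-- A (strictly full additive) subcategory of objects `A ⊆ 𝒟` is the heart of a
bounded t-structure if it contains the zero objects, is closed under isomorphism,
satisfies `Hom(X⟦i⟧, Y⟦j⟧) = 0` for `X, Y ∈ A` and `i > j`, and every object of `𝒟`
admits a finite filtration by distinguished triangles whose factors are shifts
`A_i⟦k_i⟧` of objects of `A` with strictly decreasing `k₁ > k₂ > … > kₘ`. -/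
def IsHeart (A : Set 𝒟) : Prop :=
  (∀ Z : 𝒟, IsZero Z → Z ∈ A) ∧
  (∀ ⦃X Y : 𝒟⦄, (X ≅ Y) → X ∈ A → Y ∈ A) ∧
  (∀ X Y : 𝒟, X ∈ A → Y ∈ A → ∀ i j : ℤ, j < i → ∀ f : X⟦i⟧ ⟶ Y⟦j⟧, f = 0) ∧
  (∀ E : 𝒟, ∃ (m : ℕ) (k : ℕ → ℤ) (Eo : ℕ → 𝒟) (Ao : ℕ → 𝒟)
      (f : ∀ i : ℕ, Eo i ⟶ Eo (i + 1)) (g : ∀ i : ℕ, Eo (i + 1) ⟶ (Ao i)⟦k i⟧)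
      (h : ∀ i : ℕ, (Ao i)⟦k i⟧ ⟶ (Eo i)⟦(1 : ℤ)⟧),
      IsZero (Eo 0) ∧ Eo m = E ∧
      (∀ i : ℕ, i + 1 < m → k (i + 1) < k i) ∧
      (∀ i : ℕ, i < m → Ao i ∈ A) ∧
      (∀ i : ℕ, i < m → Triangle.mk (f i) (g i) (h i) ∈ distTriang 𝒟))

/-- `(F, T)` is a torsion pair on the heart `A`: both are (additive) subcategories of
`A`, `Hom(T, F) = 0` for `T ∈ 𝒯` and `F ∈ ℱ`, and every `E ∈ A` fits into a
distinguished triangle `T → E → F → T⟦1⟧` with `T ∈ 𝒯` and `F ∈ ℱ`. -/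
def IsTorsionPair (A F T : Set 𝒟) : Prop :=
  F ⊆ A ∧ T ⊆ A ∧
  (∀ Z : 𝒟, IsZero Z → Z ∈ F ∧ Z ∈ T) ∧
  (∀ X Y : 𝒟, X ∈ T → Y ∈ F → ∀ f : X ⟶ Y, f = 0) ∧
  (∀ E ∈ A, ∃ (X Y : 𝒟) (_ : X ∈ T) (_ : Y ∈ F)
      (f : X ⟶ E) (g : E ⟶ Y) (h : Y ⟶ X⟦(1 : ℤ)⟧),
      Triangle.mk f g h ∈ distTriang 𝒟)

/-- The tilt `𝒜♯ = ⟨ℱ[1], 𝒯⟩` of a torsion pair: the objects `E` admitting a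
distinguished triangle `F⟦1⟧ → E → T → F⟦1⟧⟦1⟧` with `F ∈ ℱ` and `T ∈ 𝒯`. -/
def tilt (F T : Set 𝒟) : Set 𝒟 :=
  {E : 𝒟 | ∃ (X Y : 𝒟) (_ : X ∈ F) (_ : Y ∈ T)
      (f : X⟦(1 : ℤ)⟧ ⟶ E) (g : E ⟶ Y) (h : Y ⟶ (X⟦(1 : ℤ)⟧)⟦(1 : ℤ)⟧),
      Triangle.mk f g h ∈ distTriang 𝒟}

/-- transport a distinguished triangle along isomorphisms of its three objects -/
lemma dist_of_isos {T : Triangle 𝒟} (hT : T ∈ distTriang 𝒟) {X Y Z : 𝒟}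
    (e₁ : T.obj₁ ≅ X) (e₂ : T.obj₂ ≅ Y) (e₃ : T.obj₃ ≅ Z) :
    Triangle.mk (e₁.inv ≫ T.mor₁ ≫ e₂.hom) (e₂.inv ≫ T.mor₂ ≫ e₃.hom)
      (e₃.inv ≫ T.mor₃ ≫ e₁.hom⟦(1:ℤ)⟧') ∈ distTriang 𝒟 := by
  refine isomorphic_distinguished _ hT _ ?_
  refine Triangle.isoMk _ _ e₁.symm e₂.symm e₃.symm ?_ ?_ ?_
  · show (e₁.inv ≫ T.mor₁ ≫ e₂.hom) ≫ e₂.inv = e₁.inv ≫ T.mor₁; simp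
  · show (e₂.inv ≫ T.mor₂ ≫ e₃.hom) ≫ e₃.inv = e₂.inv ≫ T.mor₂; simp
  · show (e₃.inv ≫ T.mor₃ ≫ e₁.hom⟦(1:ℤ)⟧') ≫ e₁.inv⟦(1:ℤ)⟧' = e₃.inv ≫ T.mor₃
    simp

lemma shift_hom_zero {P Q : 𝒟} (n : ℤ) (h : ∀ g : P ⟶ Q, g = 0) (f : P⟦n⟧ ⟶ Q⟦n⟧) :
    f = 0 := by
  obtain ⟨g, rfl⟩ := (shiftFunctor 𝒟 n).map_surjective f
  rw [h g, Functor.map_zero]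

lemma conj_zero {U V U' V' : 𝒟} (e₁ : U ≅ U') (e₂ : V ≅ V')
    (h : ∀ g : U' ⟶ V', g = 0) (f : U ⟶ V) : f = 0 := by
  have : f = e₁.hom ≫ (e₁.inv ≫ f ≫ e₂.hom) ≫ e₂.inv := by simp
  rw [this, h (e₁.inv ≫ f ≫ e₂.hom)]; simp

/-- `a⟦k⟧⟦m⟧ ≅ a⟦n⟧` when `k + m = n`. -/
noncomputable def shiftIso (a : 𝒟) (k m n : ℤ) (h : k + m = n) : (a⟦k⟧)⟦m⟧ ≅ a⟦n⟧ :=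
  ((shiftFunctorAdd' 𝒟 k m n h).symm.app a)

/-- `a⟦0⟧ ≅ a` -/
noncomputable def shiftZero' (a : 𝒟) : a⟦(0:ℤ)⟧ ≅ a := (shiftFunctorZero 𝒟 ℤ).app a

lemma hom_zero_of_shift1 {P Q : 𝒟} (h : ∀ g : P⟦(1:ℤ)⟧ ⟶ Q, g = 0)
    (f : P ⟶ Q⟦(-1:ℤ)⟧) : f = 0 := by
  set e : (Q⟦(-1:ℤ)⟧)⟦(1:ℤ)⟧ ≅ Q := shiftIso Q (-1) 1 0 (by ring) ≪≫ shiftZero' Q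
  have h1 : f⟦(1:ℤ)⟧' ≫ e.hom = 0 := h _
  have h2 : f⟦(1:ℤ)⟧' = 0 := by
    have : f⟦(1:ℤ)⟧' = (f⟦(1:ℤ)⟧' ≫ e.hom) ≫ e.inv := by simp
    rw [this, h1, Limits.zero_comp]
  exact (shiftFunctor 𝒟 (1:ℤ)).map_injective (by simpa using h2)

section Devissage

/-- objects isomorphic to `a⟦k⟧` for some `a ∈ A` -/
def ShA (A : Set 𝒟) (k : ℤ) : Set 𝒟 := {E : 𝒟 | ∃ a ∈ A, Nonempty (E ≅ a⟦k⟧)}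

lemma mem_ShA_self {A : Set 𝒟} {a : 𝒟} (ha : a ∈ A) (k : ℤ) : a⟦k⟧ ∈ ShA A k :=
  ⟨a, ha, ⟨Iso.refl _⟩⟩

lemma ShA_shift {A : Set 𝒟} {E : 𝒟} {k : ℤ} (hE : E ∈ ShA A k) (m : ℤ) :
    E⟦m⟧ ∈ ShA A (k + m) := by
  obtain ⟨a, ha, ⟨e⟩⟩ := hE
  exact ⟨a, ha, ⟨(shiftFunctor 𝒟 m).mapIso e ≪≫ shiftIso a k m (k+m) rfl⟩⟩

lemma ShA_iso {A : Set 𝒟} {E E' : 𝒟} {k : ℤ} (hE : E ∈ ShA A k) (e : E' ≅ E) :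
    E' ∈ ShA A k := by
  obtain ⟨a, ha, ⟨e'⟩⟩ := hE
  exact ⟨a, ha, ⟨e ≪≫ e'⟩⟩

variable {A : Set 𝒟}

lemma vanish_ShA (hA : IsHeart A) {U V : 𝒟} {i j : ℤ} (hU : U ∈ ShA A i)
    (hV : V ∈ ShA A j) (hij : j < i) (f : U ⟶ V) : f = 0 := by
  obtain ⟨a, ha, ⟨e₁⟩⟩ := hU
  obtain ⟨b, hb, ⟨e₂⟩⟩ := hV
  exact conj_zero e₁ e₂ (hA.2.2.1 a b ha hb i j hij) f

/-- `X` admits a finite filtration with factors in `ShA A k` for various `k ≥ n`. -/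
inductive TowerGE (A : Set 𝒟) (n : ℤ) : 𝒟 → Prop
  | zero (Z : 𝒟) : IsZero Z → TowerGE A n Z
  | step {P : 𝒟} (X B : 𝒟) (k : ℤ) (f : P ⟶ X) (g : X ⟶ B) (h : B ⟶ P⟦(1:ℤ)⟧) :
      TowerGE A n P → n ≤ k → B ∈ ShA A k →
      (Triangle.mk f g h ∈ distTriang 𝒟) → TowerGE A n X

lemma TowerGE.relax {n m : ℤ} {X : 𝒟} (hX : TowerGE A n X) (hmn : m ≤ n) :
    TowerGE A m X := by
  induction hX with
  | zero Z hZ => exact TowerGE.zero Z hZ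
  | step X B k f g h _ hk hB hT ih => exact TowerGE.step X B k f g h ih (hmn.trans hk) hB hT

lemma TowerGE.of_ShA {n k : ℤ} {X : 𝒟} (hX : X ∈ ShA A k) (hnk : n ≤ k) :
    TowerGE A n X := by
  refine TowerGE.step (P := (0 : 𝒟)) X X k 0 (𝟙 X) 0 (TowerGE.zero _ (isZero_zero 𝒟)) hnk hX ?_
  exact contractible_distinguished₁ X

lemma TowerGE.shift1 {n : ℤ} {X : 𝒟} (hX : TowerGE A n X) :
    TowerGE A (n + 1) (X⟦(1:ℤ)⟧) := by
  induction hX with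
  | zero Z hZ => exact TowerGE.zero _ (Functor.map_isZero _ hZ)
  | step X B k f g h _ hk hB hT ih =>
      have h3 := rot_of_distTriang _ (rot_of_distTriang _ (rot_of_distTriang _ hT))
      exact TowerGE.step _ _ (k+1) _ _ _ ih (by omega) (ShA_shift hB 1) h3

lemma TowerGE.vanish (hA : IsHeart A) {n j : ℤ} {X V : 𝒟} (hX : TowerGE A n X)
    (hV : V ∈ ShA A j) (hj : j < n) (f : X ⟶ V) : f = 0 := by
  induction hX with
  | zero Z hZ => exact hZ.eq_of_src f 0
  | step X B k a b c _ hk hB hT ih =>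
      have h1 : a ≫ f = 0 := ih _
      obtain ⟨g, hg⟩ := Triangle.yoneda_exact₂ _ hT f h1
      rw [hg, vanish_ShA hA hB hV (lt_of_lt_of_le hj hk) g]; exact Limits.comp_zero

end Devissage



section Lemmas

/-- Composition lemma (octahedron substitute, using vanishing): given consecutive steps
`X → Y` with cone `B₁` and `Y → Z` with cone `B₂`, under suitable `Hom`-vanishing the
composite `X → Z` has a cone `M` which is an extension of `B₂` by `B₁`. -/
lemma compose_steps {X Y Z B₁ B₂ : 𝒟} {f : X ⟶ Y} {y₁ : Y ⟶ B₁} {y₂ : B₁ ⟶ X⟦(1:ℤ)⟧}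
    {g : Y ⟶ Z} {z : Z ⟶ B₂} {δ₂ : B₂ ⟶ Y⟦(1:ℤ)⟧}
    (hΔ1 : Triangle.mk f y₁ y₂ ∈ distTriang 𝒟) (hΔ2 : Triangle.mk g z δ₂ ∈ distTriang 𝒟)
    (k1 : ∀ φ : B₁ ⟶ B₂, φ = 0) (k2 : ∀ φ : Y⟦(1:ℤ)⟧ ⟶ B₂, φ = 0)
    (k3 : ∀ φ : X⟦(1:ℤ)⟧ ⟶ B₁, φ = 0) :
    ∃ (M : 𝒟) (π : Z ⟶ M) (σ : M ⟶ X⟦(1:ℤ)⟧) (m₁ : B₁ ⟶ M) (m₂ : M ⟶ B₂)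
      (m₃ : B₂ ⟶ B₁⟦(1:ℤ)⟧),
      (Triangle.mk (f ≫ g) π σ ∈ distTriang 𝒟) ∧ (Triangle.mk m₁ m₂ m₃ ∈ distTriang 𝒟) := by
  obtain ⟨M, π, σ, hΔ3⟩ := distinguished_cocone_triangle (f ≫ g)
  -- b₁ : B₁ ⟶ M
  obtain ⟨b₁, hb₁a, hb₁b⟩ : ∃ b₁ : B₁ ⟶ M, y₁ ≫ b₁ = g ≫ π ∧ y₂ ≫ (𝟙 X)⟦(1:ℤ)⟧' = b₁ ≫ σ :=
    complete_distinguished_triangle_morphism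
      (Triangle.mk f y₁ y₂) (Triangle.mk (f ≫ g) π σ) hΔ1 hΔ3 (𝟙 X) g (Category.id_comp _).symm
  rw [CategoryTheory.Functor.map_id, Category.comp_id] at hb₁b
  -- b₂ : M ⟶ B₂
  obtain ⟨b₂, hb₂a, hb₂b⟩ : ∃ b₂ : M ⟶ B₂, π ≫ b₂ = 𝟙 Z ≫ z ∧ σ ≫ f⟦(1:ℤ)⟧' = b₂ ≫ δ₂ :=
    complete_distinguished_triangle_morphism
      (Triangle.mk (f ≫ g) π σ) (Triangle.mk g z δ₂) hΔ3 hΔ2 f (𝟙 Z) (Category.comp_id _)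
  rw [Category.id_comp] at hb₂a
  -- R := cone b₁
  obtain ⟨R, c, c', hΔ4⟩ := distinguished_cocone_triangle b₁
  -- θ : R ⟶ B₂ lifting b₂
  have hbb : b₁ ≫ b₂ = 0 := k1 _
  obtain ⟨θ, hθ⟩ : ∃ θ : R ⟶ B₂, b₂ = c ≫ θ := Triangle.yoneda_exact₂ _ hΔ4 b₂ hbb
  -- ι : B₂ ⟶ R
  obtain ⟨ι, hιa, hιb⟩ : ∃ ι : B₂ ⟶ R, z ≫ ι = π ≫ c ∧ δ₂ ≫ y₁⟦(1:ℤ)⟧' = ι ≫ c' :=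
    complete_distinguished_triangle_morphism
      (Triangle.mk g z δ₂) (Triangle.mk b₁ c c') hΔ2 hΔ4 y₁ π hb₁a.symm
  have z12a : f ≫ y₁ = 0 := comp_distTriang_mor_zero₁₂ _ hΔ1
  have z23d : c ≫ c' = 0 := comp_distTriang_mor_zero₂₃ _ hΔ4
  have z31d : c' ≫ b₁⟦(1:ℤ)⟧' = 0 := comp_distTriang_mor_zero₃₁ _ hΔ4
  -- ι ≫ θ = 𝟙
  have hιθ : ι ≫ θ = 𝟙 B₂ := by
    have h0 : z ≫ (ι ≫ θ - 𝟙 B₂) = 0 := by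
      rw [Preadditive.comp_sub, ← Category.assoc, hιa, Category.assoc, ← hθ, hb₂a]
      simp
    obtain ⟨m, hm⟩ := Triangle.yoneda_exact₃ _ hΔ2 _ h0
    rw [← sub_eq_zero, hm, k2 m]; exact Limits.comp_zero
  -- θ ≫ (δ₂ ≫ y₁⟦1⟧) = c'
  have hd : θ ≫ (δ₂ ≫ y₁⟦(1:ℤ)⟧') = c' := by
    have e2 : (σ ≫ f⟦(1:ℤ)⟧') ≫ y₁⟦(1:ℤ)⟧' = 0 := by
      rw [Category.assoc, ← Functor.map_comp, z12a, Functor.map_zero, Limits.comp_zero]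
    have e1 : c ≫ (θ ≫ (δ₂ ≫ y₁⟦(1:ℤ)⟧')) = 0 := by
      rw [← Category.assoc, ← hθ, ← Category.assoc, hb₂b, Category.assoc] at *
      rw [← Category.assoc] at e2 ⊢
      exact e2
    have hcd : c ≫ (θ ≫ (δ₂ ≫ y₁⟦(1:ℤ)⟧') - c') = 0 := by
      rw [Preadditive.comp_sub, e1, z23d, sub_zero]
    obtain ⟨e, he⟩ : ∃ e : B₁⟦(1:ℤ)⟧ ⟶ B₁⟦(1:ℤ)⟧,
        θ ≫ (δ₂ ≫ y₁⟦(1:ℤ)⟧') - c' = c' ≫ e := Triangle.yoneda_exact₃ _ hΔ4 _ hcd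
    have hι0 : (δ₂ ≫ y₁⟦(1:ℤ)⟧') ≫ e = 0 := by
      have h5 : ι ≫ (θ ≫ (δ₂ ≫ y₁⟦(1:ℤ)⟧') - c') = 0 := by
        rw [Preadditive.comp_sub, ← Category.assoc, hιθ, Category.id_comp, ← hιb, sub_self]
      rw [he, ← Category.assoc, ← hιb] at h5
      exact h5
    have hδe : δ₂ ≫ (y₁⟦(1:ℤ)⟧' ≫ e) = 0 := by rw [← Category.assoc]; exact hι0
    obtain ⟨ς, hς⟩ : ∃ ς : Z⟦(1:ℤ)⟧ ⟶ B₁⟦(1:ℤ)⟧,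
        y₁⟦(1:ℤ)⟧' ≫ e = (-g⟦(1:ℤ)⟧') ≫ ς :=
      Triangle.yoneda_exact₃ _ (rot_of_distTriang _ hΔ2) _ hδe
    obtain ⟨e₀, he₀⟩ := (shiftFunctor 𝒟 (1:ℤ)).map_surjective e
    obtain ⟨ς₀, hς₀⟩ := (shiftFunctor 𝒟 (1:ℤ)).map_surjective ς
    have hde : y₁ ≫ e₀ = -(g ≫ ς₀) := by
      apply (shiftFunctor 𝒟 (1:ℤ)).map_injective
      rw [Functor.map_comp, Functor.map_neg, Functor.map_comp, he₀, hς₀]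
      simpa using hς
    have h' : g ≫ ς₀ = -(y₁ ≫ e₀) := by rw [hde, neg_neg]
    have hfg : (f ≫ g) ≫ ς₀ = 0 := by
      rw [Category.assoc, h', Preadditive.comp_neg, ← Category.assoc, z12a,
        Limits.zero_comp, neg_zero]
    obtain ⟨ξ₃, hξ₃⟩ : ∃ ξ₃ : M ⟶ B₁, ς₀ = π ≫ ξ₃ := Triangle.yoneda_exact₂ _ hΔ3 ς₀ hfg
    have hy : y₁ ≫ (e₀ + b₁ ≫ ξ₃) = 0 := by
      rw [Preadditive.comp_add, hde, hξ₃, ← Category.assoc, ← Category.assoc, ← hb₁a,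
        Category.assoc, neg_add_cancel]
    obtain ⟨ρ₅, hρ₅⟩ : ∃ ρ₅ : X⟦(1:ℤ)⟧ ⟶ B₁, e₀ + b₁ ≫ ξ₃ = y₂ ≫ ρ₅ :=
      Triangle.yoneda_exact₂ _ (rot_of_distTriang _ hΔ1) _ hy
    have he₀' : e₀ = -(b₁ ≫ ξ₃) := by
      have h0 : e₀ + b₁ ≫ ξ₃ = 0 := by rw [hρ₅, k3 ρ₅, Limits.comp_zero]
      exact eq_neg_of_add_eq_zero_left h0
    have hez : c' ≫ e = 0 := by
      rw [← he₀, he₀', Functor.map_neg, Functor.map_comp, Preadditive.comp_neg,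
        ← Category.assoc, z31d, Limits.zero_comp, neg_zero]
    rw [← sub_eq_zero, he, hez]
  -- injectivity of postcomposition with θ
  have hbc : b₁ ≫ c = 0 := comp_distTriang_mor_zero₁₂ _ hΔ4
  have z23a : y₁ ≫ y₂ = 0 := comp_distTriang_mor_zero₂₃ _ hΔ1
  have hinj : ∀ {V : 𝒟} (v : V ⟶ R), v ≫ θ = 0 → v = 0 := by
    intro V v hv
    have hvc' : v ≫ c' = 0 := by
      rw [← hd, ← Category.assoc, hv, Limits.zero_comp]
    obtain ⟨u, hu⟩ : ∃ u : V ⟶ M, v = u ≫ c := Triangle.coyoneda_exact₃ _ hΔ4 v hvc'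
    have hub : u ≫ b₂ = 0 := by rw [hθ, ← Category.assoc, ← hu, hv]
    have hxf : (u ≫ σ) ≫ (-f⟦(1:ℤ)⟧') = 0 := by
      rw [Preadditive.comp_neg, Category.assoc, hb₂b, ← Category.assoc, hub,
        Limits.zero_comp, neg_zero]
    obtain ⟨p, hp⟩ : ∃ p : V ⟶ B₁, u ≫ σ = p ≫ y₂ :=
      Triangle.coyoneda_exact₃ _ (rot_of_distTriang _ hΔ1) _ hxf
    have hu' : (u - p ≫ b₁) ≫ σ = 0 := by
      rw [Preadditive.sub_comp, hp, Category.assoc, ← hb₁b, sub_self]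
    obtain ⟨w', hw'⟩ : ∃ w' : V ⟶ Z, u - p ≫ b₁ = w' ≫ π :=
      Triangle.coyoneda_exact₃ _ hΔ3 _ hu'
    have hwz : w' ≫ z = 0 := by
      rw [← hb₂a, ← Category.assoc, ← hw', Preadditive.sub_comp, hub, Category.assoc, hbb]
      simp
    obtain ⟨y', hy'⟩ : ∃ y' : V ⟶ Y, w' = y' ≫ g := Triangle.coyoneda_exact₂ _ hΔ2 w' hwz
    have hupc : u ≫ c = (u - p ≫ b₁) ≫ c := by
      rw [Preadditive.sub_comp, Category.assoc, hbc, Limits.comp_zero, sub_zero]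
    rw [hu, hupc, hw', hy', Category.assoc, Category.assoc, ← Category.assoc g π c,
      ← hb₁a, Category.assoc, hbc]
    simp
  have hθι : θ ≫ ι = 𝟙 R := by
    have : (𝟙 R - θ ≫ ι) ≫ θ = 0 := by
      rw [Preadditive.sub_comp, Category.id_comp, Category.assoc, hιθ, Category.comp_id,
        sub_self]
    have h0 := hinj _ this
    exact (sub_eq_zero.mp h0).symm
  refine ⟨M, π, σ, b₁, c ≫ θ, ι ≫ c', hΔ3, ?_⟩
  refine isomorphic_distinguished _ hΔ4 _ ?_
  have : IsIso θ := ⟨ι, hθι, hιθ⟩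
  refine Triangle.isoMk _ _ (Iso.refl _) (Iso.refl _) (asIso θ).symm ?_ ?_ ?_
  · exact (Category.comp_id _).trans (Category.id_comp _).symm
  · show (c ≫ θ) ≫ inv θ = 𝟙 M ≫ c; rw [Category.id_comp, Category.assoc, IsIso.hom_inv_id, Category.comp_id]
  · show (ι ≫ c') ≫ (𝟙 B₁)⟦(1:ℤ)⟧' = inv θ ≫ c'
    rw [CategoryTheory.Functor.map_id, Category.comp_id]
    have hinv : inv θ = ι := by
      rw [← Category.comp_id (inv θ), ← hθι, ← Category.assoc, IsIso.inv_hom_id,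
        Category.id_comp]
    rw [hinv]


/-- Refinement lemma (octahedron substitute): split a filtration step `X → E₂` with
cone `Ao` along a distinguished triangle `To → Ao → Fo`, under suitable vanishing. -/
lemma refine_step {X E₂ Ao To Fo : 𝒟} {u : X ⟶ E₂} {v : E₂ ⟶ Ao} {w : Ao ⟶ X⟦(1:ℤ)⟧}
    {s : To ⟶ Ao} {t : Ao ⟶ Fo} {r : Fo ⟶ To⟦(1:ℤ)⟧}
    (hΔa : Triangle.mk u v w ∈ distTriang 𝒟) (hΔb : Triangle.mk s t r ∈ distTriang 𝒟)
    (h1 : ∀ φ : X ⟶ Fo⟦(-1:ℤ)⟧, φ = 0) (h2 : ∀ φ : X⟦(1:ℤ)⟧ ⟶ Fo, φ = 0)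
    (h3 : ∀ φ : To⟦(1:ℤ)⟧ ⟶ Fo, φ = 0) (h4 : ∀ φ : X⟦(1:ℤ)⟧ ⟶ Fo⟦(-1:ℤ)⟧, φ = 0)
    (h6 : ∀ φ : Ao ⟶ Fo⟦(-1:ℤ)⟧, φ = 0) (h7 : ∀ φ : To ⟶ Fo⟦(-1:ℤ)⟧, φ = 0)
    (h8 : ∀ φ : To ⟶ Fo, φ = 0) (h9 : ∀ φ : Ao⟦(1:ℤ)⟧ ⟶ Fo, φ = 0) :
    ∃ (P : 𝒟) (a : X ⟶ P) (b : P ⟶ To) (c : To ⟶ X⟦(1:ℤ)⟧)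
      (d : P ⟶ E₂) (e : E₂ ⟶ Fo) (f' : Fo ⟶ P⟦(1:ℤ)⟧),
      (Triangle.mk a b c ∈ distTriang 𝒟) ∧ (Triangle.mk d e f' ∈ distTriang 𝒟) := by
  obtain ⟨G₀, g₀, h₀, hΔ3⟩ := distinguished_cocone_triangle (v ≫ t)
  obtain ⟨α, β, hT3'⟩ : ∃ (α : G₀⟦(-1:ℤ)⟧ ⟶ E₂) (β : Fo ⟶ (G₀⟦(-1:ℤ)⟧)⟦(1:ℤ)⟧),
      Triangle.mk α (v ≫ t) β ∈ distTriang 𝒟 := ⟨_, _, inv_rot_of_distTriang _ hΔ3⟩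
  have z12a : u ≫ v = 0 := comp_distTriang_mor_zero₁₂ _ hΔa
  have z12b : s ≫ t = 0 := comp_distTriang_mor_zero₁₂ _ hΔb
  have z31a : w ≫ u⟦(1:ℤ)⟧' = 0 := comp_distTriang_mor_zero₃₁ _ hΔa
  have zαq : α ≫ (v ≫ t) = 0 := comp_distTriang_mor_zero₁₂ _ hT3'
  -- γ : X ⟶ Ef lifting u
  obtain ⟨γ, hγ⟩ : ∃ γ : X ⟶ G₀⟦(-1:ℤ)⟧, u = γ ≫ α :=
    Triangle.coyoneda_exact₂ _ hT3' u
      (by show u ≫ (v ≫ t) = 0; rw [← Category.assoc, z12a, Limits.zero_comp])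
  obtain ⟨C, δ, ε, hΔd⟩ := distinguished_cocone_triangle γ
  have zγδ : γ ≫ δ = 0 := comp_distTriang_mor_zero₁₂ _ hΔd
  -- φ : C ⟶ Ao
  obtain ⟨φ, hφa, hφb⟩ : ∃ φ : C ⟶ Ao, δ ≫ φ = α ≫ v ∧ ε ≫ (𝟙 X)⟦(1:ℤ)⟧' = φ ≫ w :=
    complete_distinguished_triangle_morphism (Triangle.mk γ δ ε) (Triangle.mk u v w)
      hΔd hΔa (𝟙 X) α (by show γ ≫ α = 𝟙 X ≫ u; rw [← hγ, Category.id_comp])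
  rw [CategoryTheory.Functor.map_id, Category.comp_id] at hφb
  -- φ ≫ t = 0
  have hφt : φ ≫ t = 0 := by
    have hδφt : δ ≫ (φ ≫ t) = 0 := by
      rw [← Category.assoc, hφa, Category.assoc, zαq]
    obtain ⟨ρ₀, hρ₀⟩ : ∃ ρ₀ : X⟦(1:ℤ)⟧ ⟶ Fo, φ ≫ t = ε ≫ ρ₀ :=
      Triangle.yoneda_exact₃ _ hΔd _ hδφt
    rw [hρ₀, h2 ρ₀, Limits.comp_zero]
  -- ψ : C ⟶ To
  obtain ⟨ψ, hψ⟩ : ∃ ψ : C ⟶ To, φ = ψ ≫ s := Triangle.coyoneda_exact₂ _ hΔb φ hφt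
  -- s ≫ w ≫ γ⟦1⟧ = 0
  have hsw : s ≫ (w ≫ γ⟦(1:ℤ)⟧') = 0 := by
    have hκ : (s ≫ (w ≫ γ⟦(1:ℤ)⟧')) ≫ (-(α⟦(1:ℤ)⟧')) = 0 := by
      simp only [Preadditive.comp_neg, Category.assoc, neg_eq_zero]
      rw [← Functor.map_comp, ← hγ, z31a, Limits.comp_zero]
    obtain ⟨κ', hκ'⟩ : ∃ κ' : To ⟶ Fo, s ≫ (w ≫ γ⟦(1:ℤ)⟧') = κ' ≫ β :=
      Triangle.coyoneda_exact₃ _ (rot_of_distTriang _ hT3') _ hκ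
    rw [hκ', h8 κ', Limits.zero_comp]
  -- b : Fo ⟶ Ef⟦1⟧ with t ≫ b = w ≫ γ⟦1⟧
  obtain ⟨bb, hbb⟩ : ∃ bb : Fo ⟶ (G₀⟦(-1:ℤ)⟧)⟦(1:ℤ)⟧, w ≫ γ⟦(1:ℤ)⟧' = t ≫ bb :=
    Triangle.yoneda_exact₂ _ hΔb _ hsw
  -- TR3 fill ξ : To ⟶ C (after shifting)
  have hrot3 := rot_of_distTriang _ (rot_of_distTriang _ (rot_of_distTriang _ hΔd))
  obtain ⟨Ξ, hΞa, hΞb⟩ : ∃ Ξ : To⟦(1:ℤ)⟧ ⟶ C⟦(1:ℤ)⟧,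
      r ≫ Ξ = (-bb) ≫ (-(δ⟦(1:ℤ)⟧')) ∧ (-(s⟦(1:ℤ)⟧')) ≫ w⟦(1:ℤ)⟧' = Ξ ≫ (-(ε⟦(1:ℤ)⟧')) := by
    refine complete_distinguished_triangle_morphism (Triangle.mk t r (-(s⟦(1:ℤ)⟧')))
      (Triangle.mk (-(γ⟦(1:ℤ)⟧')) (-(δ⟦(1:ℤ)⟧')) (-(ε⟦(1:ℤ)⟧'))) (rot_of_distTriang _ hΔb)
      hrot3 w (-bb) ?_
    show t ≫ (-bb) = w ≫ (-(γ⟦(1:ℤ)⟧'))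
    rw [Preadditive.comp_neg, Preadditive.comp_neg, ← hbb]
  obtain ⟨ξ, hξ⟩ := (shiftFunctor 𝒟 (1:ℤ)).map_surjective Ξ
  have hξε : ξ ≫ ε = s ≫ w := by
    apply (shiftFunctor 𝒟 (1:ℤ)).map_injective
    rw [Functor.map_comp, Functor.map_comp, hξ]
    have := hΞb
    rw [Preadditive.neg_comp, Preadditive.comp_neg, neg_inj] at this
    exact this.symm
  -- section ρ̄ : To ⟶ C of ψ
  have hwfac : (ξ ≫ φ - s) ≫ w = 0 := by
    rw [Preadditive.sub_comp, Category.assoc, ← hφb, hξε, sub_self]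
  obtain ⟨τ₃, hτ₃⟩ : ∃ τ₃ : To ⟶ E₂, ξ ≫ φ - s = τ₃ ≫ v :=
    Triangle.coyoneda_exact₃ _ hΔa _ hwfac
  have hτq : τ₃ ≫ (v ≫ t) = 0 := by
    rw [show τ₃ ≫ (v ≫ t) = (τ₃ ≫ v) ≫ t by simp, ← hτ₃, Preadditive.sub_comp,
      Category.assoc, hφt, Limits.comp_zero, z12b, sub_self]
  obtain ⟨τ₄, hτ₄⟩ : ∃ τ₄ : To ⟶ G₀⟦(-1:ℤ)⟧, τ₃ = τ₄ ≫ α :=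
    Triangle.coyoneda_exact₂ _ hT3' τ₃ hτq
  have hsec : (ξ - τ₄ ≫ δ) ≫ φ = s := by
    rw [Preadditive.sub_comp, Category.assoc, hφa, ← Category.assoc, ← hτ₄, ← hτ₃]
    abel
  have hρψ : (ξ - τ₄ ≫ δ) ≫ ψ = 𝟙 To := by
    have h0 : ((ξ - τ₄ ≫ δ) ≫ ψ - 𝟙 To) ≫ s = 0 := by
      rw [Preadditive.sub_comp, Category.assoc, ← hψ, hsec, Category.id_comp, sub_self]
    obtain ⟨zz, hzz⟩ : ∃ zz : To ⟶ Fo⟦(-1:ℤ)⟧,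
        (ξ - τ₄ ≫ δ) ≫ ψ - 𝟙 To = zz ≫ (Triangle.mk s t r).invRotate.mor₁ :=
      Triangle.coyoneda_exact₂ _ (inv_rot_of_distTriang _ hΔb) _ h0
    rw [← sub_eq_zero, hzz, h7 zz]; exact Limits.zero_comp
  set ρ' : To ⟶ C := ξ - τ₄ ≫ δ with hρ'
  -- Hom(E₂, Fo⟦-1⟧) = 0
  have hE2F : ∀ χ : E₂ ⟶ Fo⟦(-1:ℤ)⟧, χ = 0 := by
    intro χ
    obtain ⟨g', hg'⟩ := Triangle.yoneda_exact₂ _ hΔa χ (h1 _)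
    rw [hg', h6 g']; exact Limits.comp_zero
  -- Hom(G₀, Fo) = 0
  have hG₀F : ∀ χ : G₀ ⟶ Fo, χ = 0 := by
    intro ρ
    have z3 : (v ≫ t) ≫ g₀ = 0 := comp_distTriang_mor_zero₁₂ _ hΔ3
    have hκ₁ : v ≫ (t ≫ (g₀ ≫ ρ)) = 0 := by
      rw [← Category.assoc, ← Category.assoc, z3, Limits.zero_comp]
    obtain ⟨m, hm⟩ : ∃ m : X⟦(1:ℤ)⟧ ⟶ Fo, t ≫ (g₀ ≫ ρ) = w ≫ m :=
      Triangle.yoneda_exact₃ _ hΔa _ hκ₁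
    have ht0 : t ≫ (g₀ ≫ ρ) = 0 := by rw [hm, h2 m, Limits.comp_zero]
    obtain ⟨m₅, hm₅⟩ : ∃ m₅ : To⟦(1:ℤ)⟧ ⟶ Fo, g₀ ≫ ρ = r ≫ m₅ :=
      Triangle.yoneda_exact₃ _ hΔb _ ht0
    have hg₀ρ : g₀ ≫ ρ = 0 := by rw [hm₅, h3 m₅, Limits.comp_zero]
    obtain ⟨φ₂, hφ₂⟩ : ∃ φ₂ : E₂⟦(1:ℤ)⟧ ⟶ Fo, ρ = h₀ ≫ φ₂ :=
      Triangle.yoneda_exact₃ _ hΔ3 ρ hg₀ρ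
    have hE21 : φ₂ = 0 := by
      have h3a := rot_of_distTriang _ (rot_of_distTriang _ (rot_of_distTriang _ hΔa))
      have hpre : (-(u⟦(1:ℤ)⟧')) ≫ φ₂ = 0 := by
        rw [Preadditive.neg_comp, h2 (u⟦(1:ℤ)⟧' ≫ φ₂), neg_zero]
      obtain ⟨χ₁, hχ₁⟩ : ∃ χ₁ : Ao⟦(1:ℤ)⟧ ⟶ Fo, φ₂ = (-(v⟦(1:ℤ)⟧')) ≫ χ₁ :=
        Triangle.yoneda_exact₂ _ h3a φ₂ hpre
      rw [hχ₁, h9 χ₁, Limits.comp_zero]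
    rw [hφ₂, hE21, Limits.comp_zero]
  -- Hom(Ef, Fo⟦-1⟧) = 0
  have hEfF : ∀ χ : G₀⟦(-1:ℤ)⟧ ⟶ Fo⟦(-1:ℤ)⟧, χ = 0 := by
    intro χ
    refine hom_zero_of_shift1 (fun g => ?_) χ
    exact conj_zero (shiftIso G₀ (-1) 1 0 (by ring) ≪≫ shiftZero' G₀) (Iso.refl Fo)
      hG₀F g
  -- Hom(C, Fo⟦-1⟧) = 0
  have hCF : ∀ χ : C ⟶ Fo⟦(-1:ℤ)⟧, χ = 0 := by
    intro χ
    obtain ⟨m₆, hm₆⟩ : ∃ m₆ : X⟦(1:ℤ)⟧ ⟶ Fo⟦(-1:ℤ)⟧, χ = ε ≫ m₆ :=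
      Triangle.yoneda_exact₃ _ hΔd χ (hEfF _)
    rw [hm₆, h4 m₆, Limits.comp_zero]
  -- ψ ≫ ρ' = 𝟙 C
  have hψρ : ψ ≫ ρ' = 𝟙 C := by
    have hNψ : (𝟙 C - ψ ≫ ρ') ≫ ψ = 0 := by
      rw [Preadditive.sub_comp, Category.id_comp, Category.assoc, hρψ, Category.comp_id,
        sub_self]
    have hNφ : (𝟙 C - ψ ≫ ρ') ≫ φ = 0 := by
      rw [hψ, ← Category.assoc, hNψ, Limits.zero_comp]
    have hNε : (𝟙 C - ψ ≫ ρ') ≫ ε = 0 := by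
      rw [hφb, ← Category.assoc, hNφ, Limits.zero_comp]
    obtain ⟨e', he'⟩ : ∃ e' : C ⟶ G₀⟦(-1:ℤ)⟧, 𝟙 C - ψ ≫ ρ' = e' ≫ δ :=
      Triangle.coyoneda_exact₃ _ hΔd _ hNε
    have he'αv : (e' ≫ α) ≫ v = 0 := by
      rw [Category.assoc, ← hφa, ← Category.assoc, ← he', hNφ]
    obtain ⟨x, hx⟩ : ∃ x : C ⟶ X, e' ≫ α = x ≫ u := Triangle.coyoneda_exact₂ _ hΔa _ he'αv
    have hxγ : (e' - x ≫ γ) ≫ α = 0 := by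
      rw [Preadditive.sub_comp, hx, hγ, Category.assoc, sub_self]
    obtain ⟨y, hy⟩ : ∃ y : C ⟶ Fo⟦(-1:ℤ)⟧,
        e' - x ≫ γ = y ≫ (Triangle.mk α (v ≫ t) β).invRotate.mor₁ :=
      Triangle.coyoneda_exact₂ _ (inv_rot_of_distTriang _ hT3') _ hxγ
    have he'' : e' = x ≫ γ := by
      rw [← sub_eq_zero, hy, hCF y]; exact Limits.zero_comp
    have h0 : 𝟙 C - ψ ≫ ρ' = 0 := by
      rw [he', he'', Category.assoc, zγδ, Limits.comp_zero]
    exact (sub_eq_zero.mp h0).symm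
  -- conclude
  refine ⟨G₀⟦(-1:ℤ)⟧, γ, δ ≫ ψ, ρ' ≫ ε, α, v ≫ t, β, ?_, hT3'⟩
  refine isomorphic_distinguished _ hΔd _ ?_
  have : IsIso ψ := ⟨ρ', hψρ, hρψ⟩
  refine Triangle.isoMk _ _ (Iso.refl _) (Iso.refl _) (asIso ψ).symm ?_ ?_ ?_
  · exact (Category.comp_id _).trans (Category.id_comp _).symm
  · show (δ ≫ ψ) ≫ inv ψ = 𝟙 (G₀⟦(-1:ℤ)⟧) ≫ δ
    rw [Category.id_comp, Category.assoc, IsIso.hom_inv_id, Category.comp_id]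
  · show (ρ' ≫ ε) ≫ (𝟙 X)⟦(1:ℤ)⟧' = inv ψ ≫ ε
    rw [CategoryTheory.Functor.map_id, Category.comp_id]
    have hinv : inv ψ = ρ' := by
      rw [← Category.comp_id (inv ψ), ← hψρ, ← Category.assoc, IsIso.inv_hom_id,
        Category.id_comp]
    rw [hinv]

end Lemmas

section Towers

/-- packaged filtration data, as required by `IsHeart`, with all shifts `≥ l`. -/
def Pack (S : Set 𝒟) (W : 𝒟) (l : ℤ) : Prop :=
  ∃ (m : ℕ) (k : ℕ → ℤ) (Eo : ℕ → 𝒟) (Ao : ℕ → 𝒟)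
    (f : ∀ i : ℕ, Eo i ⟶ Eo (i + 1)) (g : ∀ i : ℕ, Eo (i + 1) ⟶ (Ao i)⟦k i⟧)
    (h : ∀ i : ℕ, (Ao i)⟦k i⟧ ⟶ (Eo i)⟦(1 : ℤ)⟧),
    IsZero (Eo 0) ∧ Eo m = W ∧
    (∀ i : ℕ, i + 1 < m → k (i + 1) < k i) ∧
    (∀ i : ℕ, i < m → Ao i ∈ S) ∧
    (∀ i : ℕ, i < m → Triangle.mk (f i) (g i) (h i) ∈ distTriang 𝒟) ∧
    (∀ i : ℕ, i < m → l ≤ k i)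

lemma dist_eqToHom {X Y Z X' Y' Z' : 𝒟} {f : X ⟶ Y} {g : Y ⟶ Z} {h : Z ⟶ X⟦(1:ℤ)⟧}
    (hT : Triangle.mk f g h ∈ distTriang 𝒟) (eX : X' = X) (eY : Y' = Y) (eZ : Z' = Z)
    (eX1 : (X⟦(1:ℤ)⟧ : 𝒟) = X'⟦(1:ℤ)⟧) :
    Triangle.mk (eqToHom eX ≫ f ≫ eqToHom eY.symm) (eqToHom eY ≫ g ≫ eqToHom eZ.symm)
      (eqToHom eZ ≫ h ≫ eqToHom eX1) ∈ distTriang 𝒟 := by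
  subst eX; subst eY; subst eZ
  simpa using hT

lemma Pack.zero {S : Set 𝒟} {Z : 𝒟} (hZ : IsZero Z) (l : ℤ) : Pack S Z l := by
  exact ⟨0, fun _ => 0, fun _ => Z, fun _ => Z, fun _ => 𝟙 Z, fun _ => 0, fun _ => 0,
    hZ, rfl, by omega, by omega, by omega, by omega⟩

lemma Pack.append {S : Set 𝒟} {W W' b : 𝒟} {l l' : ℤ} (hp : Pack S W l)
    (f₀ : W ⟶ W') (g₀ : W' ⟶ b⟦l'⟧) (h₀ : b⟦l'⟧ ⟶ W⟦(1:ℤ)⟧) (hl : l' < l) (hb : b ∈ S)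
    (hdist : Triangle.mk f₀ g₀ h₀ ∈ distTriang 𝒟) : Pack S W' l' := by
  classical
  obtain ⟨m, k, Eo, Ao, f, g, h, hz, hEm, hdec, hmem, hdists, hbd⟩ := hp
  subst hEm
  refine ⟨m+1, fun i => if i < m then k i else l',
    fun i => if i ≤ m then Eo i else W',
    fun i => if i < m then Ao i else b,
    fun i =>
      if h1 : i + 1 ≤ m then
        eqToHom (if_pos (by omega)) ≫ f i ≫ eqToHom (if_pos h1).symm
      else if h2 : i ≤ m then
        eqToHom (by beta_reduce; rw [if_pos h2, show i = m by omega]) ≫ f₀ ≫ eqToHom (if_neg h1).symm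
      else eqToHom (by beta_reduce; rw [if_neg h2, if_neg (show ¬ (i+1 ≤ m) by omega)]),
    fun i =>
      if h1 : i < m then
        eqToHom (if_pos (by omega)) ≫ g i ≫
          eqToHom (by beta_reduce; rw [if_pos h1, if_pos h1])
      else if h2 : i ≤ m then
        eqToHom (if_neg (by omega)) ≫ g₀ ≫ eqToHom (by beta_reduce; rw [if_neg h1, if_neg h1])
      else 0,
    fun i =>
      if h1 : i < m then
        eqToHom (by beta_reduce; rw [if_pos h1, if_pos h1]) ≫ h i ≫ eqToHom (by beta_reduce; rw [if_pos (by omega : i ≤ m)])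
      else if h2 : i ≤ m then
        eqToHom (by beta_reduce; rw [if_neg h1, if_neg h1]) ≫ h₀ ≫
          eqToHom (by beta_reduce; rw [if_pos h2, show i = m by omega])
      else 0,
    ?_, ?_, ?_, ?_, ?_, ?_⟩
  · simpa using hz
  · simp
  · intro i hi
    by_cases h1 : i + 1 < m
    · simpa [if_pos h1, if_pos (by omega : i < m)] using hdec i h1
    · have him : i + 1 = m := by omega
      rcases Nat.eq_zero_or_pos m with hm | hm
      · omega
      · have : i < m := by omega
        simp only [if_pos this, if_neg (by omega : ¬ (i+1 < m))]
        exact lt_of_lt_of_le hl (hbd i this)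
  · intro i hi
    by_cases h1 : i < m
    · simpa [if_pos h1] using hmem i h1
    · simpa [if_neg h1] using hb
  · intro i hi
    by_cases h1 : i < m
    · have h1' : i + 1 ≤ m := by omega
      simp only [dif_pos h1, dif_pos h1', dif_pos (by omega : i ≤ m)]
      exact dist_eqToHom (hdists i h1) _ _ _ _
    · have him : i = m := by omega
      have h1' : ¬ (i + 1 ≤ m) := by omega
      simp only [dif_neg h1, dif_neg (show ¬ (i+1 ≤ m) from h1'), dif_pos (by omega : i ≤ m)]
      exact dist_eqToHom hdist _ _ _ _
  · intro i hi
    by_cases h1 : i < m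
    · simp only [if_pos h1]
      exact le_of_lt (lt_of_lt_of_le hl (hbd i h1))
    · simp only [if_neg h1]
      exact le_refl l'

/-- tilt towers: a strictly decreasing tower of factors in `S`, all shifts `≥ l`. -/
inductive TTower (S : Set 𝒟) : 𝒟 → ℤ → Prop
  | zero (Z : 𝒟) (l : ℤ) : IsZero Z → TTower S Z l
  | append {W : 𝒟} {l : ℤ} (W' b : 𝒟) (l' : ℤ) (f₀ : W ⟶ W') (g₀ : W' ⟶ b⟦l'⟧)
      (h₀ : b⟦l'⟧ ⟶ W⟦(1:ℤ)⟧) : TTower S W l → l' < l → b ∈ S →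
      (Triangle.mk f₀ g₀ h₀ ∈ distTriang 𝒟) → TTower S W' l'

lemma TTower.pack {S : Set 𝒟} {W : 𝒟} {l : ℤ} (hW : TTower S W l) : Pack S W l := by
  induction hW with
  | zero Z l hZ => exact Pack.zero hZ l
  | append W' b l' f₀ g₀ h₀ _ hl hb hdist ih => exact ih.append f₀ g₀ h₀ hl hb hdist

end Towers


section TiltMem

variable {F T : Set 𝒟}

lemma tilt_iso {E E' : 𝒟} (hE : E ∈ tilt F T) (e : E ≅ E') : E' ∈ tilt F T := by
  obtain ⟨Xf, Yt, hX, hY, f, g, h, hdist⟩ := hE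
  exact ⟨Xf, Yt, hX, hY, _, _, _, dist_of_isos hdist (Iso.refl _) e (Iso.refl _)⟩

variable {A : Set 𝒟} (hFT : IsTorsionPair A F T)
include hFT

lemma zero_mem_tilt {Z : 𝒟} (hZ : IsZero Z) : Z ∈ tilt F T := by
  refine ⟨Z, Z, (hFT.2.2.1 Z hZ).1, (hFT.2.2.1 Z hZ).2, _, _, _,
    dist_of_isos (contractible_distinguished (Z⟦(1:ℤ)⟧)) (Iso.refl _)
      (((shiftFunctor 𝒟 (1:ℤ)).map_isZero hZ).iso hZ) ((isZero_zero 𝒟).iso hZ)⟩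

lemma T_mem_tilt {Y : 𝒟} (hY : Y ∈ T) : Y ∈ tilt F T := by
  refine ⟨0, Y, (hFT.2.2.1 _ (isZero_zero 𝒟)).1, hY, _, _, _,
    dist_of_isos (contractible_distinguished₁ Y)
      ((isZero_zero 𝒟).iso ((shiftFunctor 𝒟 (1:ℤ)).map_isZero (isZero_zero 𝒟)))
      (Iso.refl _) (Iso.refl _)⟩

lemma Fshift_mem_tilt {X : 𝒟} (hX : X ∈ F) : X⟦(1:ℤ)⟧ ∈ tilt F T := by
  exact ⟨X, 0, hX, (hFT.2.2.1 _ (isZero_zero 𝒟)).2, 𝟙 _, 0, 0,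
    contractible_distinguished _⟩

lemma merged_mem_tilt {Fi Ti M : 𝒟} (hFi : Fi ∈ F) (hTi : Ti ∈ T) {l l₁ : ℤ}
    (hl : l₁ = l + 1)
    {m₁ : Fi⟦l₁⟧ ⟶ M} {m₂ : M ⟶ Ti⟦l⟧} {m₃ : Ti⟦l⟧ ⟶ (Fi⟦l₁⟧)⟦(1:ℤ)⟧}
    (hdist : Triangle.mk m₁ m₂ m₃ ∈ distTriang 𝒟) : M⟦-l⟧ ∈ tilt F T := by
  have hsh := Triangle.shift_distinguished _ hdist (-l)
  refine ⟨Fi, Ti, hFi, hTi, _, _, _,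
    dist_of_isos hsh (e₁ := shiftIso Fi l₁ (-l) 1 (by omega)) (e₂ := Iso.refl (M⟦-l⟧))
      (e₃ := shiftIso Ti l (-l) 0 (by ring) ≪≫ shiftZero' Ti)⟩

end TiltMem




section Vanish

variable {A F T : Set 𝒟}

lemma tilt_vanish (hA : IsHeart A) (hFT : IsTorsionPair A F T) :
    ∀ X Y : 𝒟, X ∈ tilt F T → Y ∈ tilt F T → ∀ i j : ℤ, j < i →
      ∀ f : X⟦i⟧ ⟶ Y⟦j⟧, f = 0 := by
  rintro X Y ⟨FX, TX, hFX, hTX, a₁, a₂, a₃, hdX⟩ ⟨FY, TY, hFY, hTY, b₁, b₂, b₃, hdY⟩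
    i j hij f
  have hXi := Triangle.shift_distinguished _ hdX i
  have hYj := Triangle.shift_distinguished _ hdY j
  have memFXi : ((FX⟦(1:ℤ)⟧)⟦i⟧ : 𝒟) ∈ ShA A (1 + i) :=
    ShA_shift (mem_ShA_self (hFT.1 hFX) 1) i
  have memFYj : ((FY⟦(1:ℤ)⟧)⟦j⟧ : 𝒟) ∈ ShA A (1 + j) :=
    ShA_shift (mem_ShA_self (hFT.1 hFY) 1) j
  have memTXi : ((TX⟦i⟧) : 𝒟) ∈ ShA A i := mem_ShA_self (hFT.2.1 hTX) i
  have memTYj : ((TY⟦j⟧) : 𝒟) ∈ ShA A j := mem_ShA_self (hFT.2.1 hTY) j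
  -- step 1 : `f` composed with the map to `TY⟦j⟧` vanishes
  set TXi := (CategoryTheory.shiftFunctor (Triangle 𝒟) i).obj (Triangle.mk a₁ a₂ a₃) with hTXidef
  set TYj := (CategoryTheory.shiftFunctor (Triangle 𝒟) j).obj (Triangle.mk b₁ b₂ b₃) with hTYjdef
  have step1 : (f ≫ TYj.mor₂ : X⟦i⟧ ⟶ TY⟦j⟧) = 0 := by
    have hpre : TXi.mor₁ ≫ (f ≫ TYj.mor₂ : X⟦i⟧ ⟶ TY⟦j⟧) = 0 :=
      vanish_ShA hA memFXi memTYj (by omega) _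
    obtain ⟨κ', hκ'⟩ := Triangle.yoneda_exact₂ _ hXi _ hpre
    rw [hκ', vanish_ShA hA memTXi memTYj hij κ']; exact Limits.comp_zero
  obtain ⟨f', hf'⟩ := Triangle.coyoneda_exact₂ _ hYj f step1
  have step2 : (f' : X⟦i⟧ ⟶ (FY⟦(1:ℤ)⟧)⟦j⟧) = 0 := by
    have hpre : TXi.mor₁ ≫ (f' : X⟦i⟧ ⟶ (FY⟦(1:ℤ)⟧)⟦j⟧) = 0 :=
      vanish_ShA hA memFXi memFYj (by omega) _
    obtain ⟨f'', hf''⟩ := Triangle.yoneda_exact₂ _ hXi _ hpre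
    have hf''0 : (f'' : TX⟦i⟧ ⟶ (FY⟦(1:ℤ)⟧)⟦j⟧) = 0 := by
      rcases lt_or_eq_of_le (Int.add_one_le_iff.mpr hij) with hlt | heq
      · exact vanish_ShA hA memTXi memFYj (by omega) _
      · -- `i = j + 1` : use the torsion pair vanishing
        refine conj_zero ((shiftIso TX 1 j i (by omega)).symm) (Iso.refl _) ?_ f''
        intro g
        refine shift_hom_zero j ?_ g
        intro g'
        refine shift_hom_zero 1 ?_ g'
        intro g''
        exact hFT.2.2.2.1 TX FY hTX hFY g''
    rw [hf'', hf''0]; exact Limits.comp_zero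
  rw [hf', step2]; exact Limits.zero_comp

end Vanish


section Main

variable {A F T : Set 𝒟}

lemma step_refine (hA : IsHeart A) (hFT : IsTorsionPair A F T) {Xp E₂ Ab Ti Fi : 𝒟}
    {K : ℤ} (hTow : TowerGE A K Xp) (hTi : Ti ∈ T) (hFi : Fi ∈ F)
    {u : Xp ⟶ E₂} {v : E₂ ⟶ Ab} {w : Ab ⟶ Xp⟦(1:ℤ)⟧} (hAb : Ab ∈ ShA A K)
    (hΔa : Triangle.mk u v w ∈ distTriang 𝒟)
    {s : Ti⟦K⟧ ⟶ Ab} {t : Ab ⟶ Fi⟦K⟧} {r : Fi⟦K⟧ ⟶ (Ti⟦K⟧)⟦(1:ℤ)⟧}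
    (hΔb : Triangle.mk s t r ∈ distTriang 𝒟) :
    ∃ (P : 𝒟) (a : Xp ⟶ P) (b : P ⟶ Ti⟦K⟧) (c : Ti⟦K⟧ ⟶ Xp⟦(1:ℤ)⟧)
      (d : P ⟶ E₂) (e : E₂ ⟶ Fi⟦K⟧) (f' : Fi⟦K⟧ ⟶ P⟦(1:ℤ)⟧),
      (Triangle.mk a b c ∈ distTriang 𝒟) ∧ (Triangle.mk d e f' ∈ distTriang 𝒟) ∧
      TowerGE A K P := by
  have memF : (Fi⟦K⟧ : 𝒟) ∈ ShA A K := mem_ShA_self (hFT.1 hFi) K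
  have memFm : ((Fi⟦K⟧)⟦(-1:ℤ)⟧ : 𝒟) ∈ ShA A (K + -1) := ShA_shift memF (-1)
  have memT : (Ti⟦K⟧ : 𝒟) ∈ ShA A K := mem_ShA_self (hFT.2.1 hTi) K
  obtain ⟨P, a, b, c, d, e, f', hD1, hD2⟩ := refine_step hΔa hΔb
    (fun φ => hTow.vanish hA memFm (by omega) φ)
    (fun φ => hTow.shift1.vanish hA memF (by omega) φ)
    (fun φ => vanish_ShA hA (ShA_shift memT 1) memF (by omega) φ)
    (fun φ => hTow.shift1.vanish hA memFm (by omega) φ)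
    (fun φ => vanish_ShA hA hAb memFm (by omega) φ)
    (fun φ => vanish_ShA hA memT memFm (by omega) φ)
    (fun φ => shift_hom_zero K (fun g => hFT.2.2.2.1 Ti Fi hTi hFi g) φ)
    (fun φ => vanish_ShA hA (ShA_shift hAb 1) memF (by omega) φ)
  exact ⟨P, a, b, c, d, e, f', hD1, hD2,
    TowerGE.step _ _ K a b c hTow le_rfl memT hD1⟩

theorem tilt_isHeart' (hA : IsHeart A) (hFT : IsTorsionPair A F T) :
    IsHeart (tilt F T) := by
  refine ⟨fun Z hZ => zero_mem_tilt hFT hZ, fun X Y e hX => tilt_iso hX e,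
    tilt_vanish hA hFT, ?_⟩
  intro E
  obtain ⟨m, k, Eo, Ao, f, g, h, hz, hEm, hdec, hmem, hdists⟩ := hA.2.2.2 E
  subst hEm
  -- k is (weakly) antitone
  have hkmono : ∀ p q : ℕ, p ≤ q → q < m → k q ≤ k p := by
    have key : ∀ d p : ℕ, p + d < m → k (p + d) ≤ k p := by
      intro d
      induction d with
      | zero => intro p _; simp
      | succ d ih =>
          intro p hp
          have h1 := hdec (p + d) (by omega)
          have h2 := ih p (by omega)
          have : p + (d + 1) = (p + d) + 1 := by omega
          rw [this]
          omega
    intro p q hpq hq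
    have : q = p + (q - p) := by omega
    rw [this]
    exact key (q - p) p (by omega)
  -- prefixes of the given filtration are towers
  have hEoTow : ∀ i : ℕ, i ≤ m → ∀ n : ℤ, (∀ j : ℕ, j < i → n ≤ k j) →
      TowerGE A n (Eo i) := by
    intro i
    induction i with
    | zero => intro _ n _; exact TowerGE.zero _ hz
    | succ i ih =>
        intro hi n hn
        exact TowerGE.step _ _ (k i) (f i) (g i) (h i)
          (ih (by omega) n (fun j hj => hn j (by omega))) (hn i (by omega))
          (mem_ShA_self (hmem i (by omega)) (k i)) (hdists i (by omega))
  rcases Nat.eq_zero_or_pos m with hm0 | hm0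
  · -- `E` is a zero object
    subst hm0
    obtain ⟨m', k', Eo', Ao', f', g', h', hz', hEm', hdec', hmem', hdists', _⟩ :=
      Pack.zero (S := tilt F T) hz 0
    exact ⟨m', k', Eo', Ao', f', g', h', hz', hEm', hdec', hmem', hdists'⟩
  -- main loop
  have main : ∀ i : ℕ, i < m → ∃ (R Fi : 𝒟) (_ : Fi ∈ F)
      (pf : R ⟶ Eo (i+1)) (pg : Eo (i+1) ⟶ Fi⟦k i⟧) (ph : Fi⟦k i⟧ ⟶ R⟦(1:ℤ)⟧),
      TTower (tilt F T) R (k i) ∧ TowerGE A (k i) R ∧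
      (Triangle.mk pf pg ph ∈ distTriang 𝒟) := by
    intro i
    induction i with
    | zero =>
        intro h0m
        obtain ⟨Ti, Fi, hTi, hFi, s₀, t₀, r₀, htor⟩ := hFT.2.2.2.2 (Ao 0) (hmem 0 h0m)
        have htorsh : ∃ (s : Ti⟦k 0⟧ ⟶ (Ao 0)⟦k 0⟧) (t : (Ao 0)⟦k 0⟧ ⟶ Fi⟦k 0⟧)
            (r : Fi⟦k 0⟧ ⟶ (Ti⟦k 0⟧)⟦(1:ℤ)⟧), Triangle.mk s t r ∈ distTriang 𝒟 :=
          ⟨_, _, _, Triangle.shift_distinguished _ htor (k 0)⟩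
        obtain ⟨s, t, r, htorsh⟩ := htorsh
        obtain ⟨P, a, b, c, d, e, f', hD1, hD2, hTowP⟩ := step_refine hA hFT
          (TowerGE.zero (Eo 0) hz) hTi hFi (mem_ShA_self (hmem 0 h0m) (k 0))
          (hdists 0 h0m) htorsh
        refine ⟨P, Fi, hFi, d, e, f', ?_, hTowP, hD2⟩
        exact TTower.append P Ti (k 0) a b c (TTower.zero (Eo 0) (k 0 + 1) hz)
          (by omega) (T_mem_tilt hFT hTi) hD1
    | succ i ih =>
        intro him
        obtain ⟨R, Fp, hFp, pf, pg, ph, htt, htowR, hpend⟩ := ih (by omega)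
        -- refine the next step of the filtration
        obtain ⟨Ti, Fi, hTi, hFi, s₀, t₀, r₀, htor⟩ :=
          hFT.2.2.2.2 (Ao (i+1)) (hmem (i+1) him)
        have htorsh : ∃ (s : Ti⟦k (i+1)⟧ ⟶ (Ao (i+1))⟦k (i+1)⟧)
            (t : (Ao (i+1))⟦k (i+1)⟧ ⟶ Fi⟦k (i+1)⟧)
            (r : Fi⟦k (i+1)⟧ ⟶ (Ti⟦k (i+1)⟧)⟦(1:ℤ)⟧), Triangle.mk s t r ∈ distTriang 𝒟 :=
          ⟨_, _, _, Triangle.shift_distinguished _ htor (k (i+1))⟩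
        obtain ⟨s, t, r, htorsh⟩ := htorsh
        have hTowEi : TowerGE A (k (i+1)) (Eo (i+1)) := by
          refine hEoTow (i+1) (by omega) _ (fun j hj => ?_)
          have h1 : k (i+1) < k i := hdec i him
          have h2 : k i ≤ k j := hkmono j i (by omega) (by omega)
          omega
        obtain ⟨P, a, b, c, d, e, f', hD1, hD2, hTowP⟩ := step_refine hA hFT
          hTowEi hTi hFi (mem_ShA_self (hmem (i+1) him) (k (i+1)))
          (hdists (i+1) him) htorsh
        have hki : k (i+1) < k i := hdec i him
        by_cases hmerge : k (i+1) = k i - 1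
        · -- merge the pending `F`-part with the new torsion part
          have hTowEi' : TowerGE A (k i) (Eo (i+1)) := by
            refine hEoTow (i+1) (by omega) _ (fun j hj => ?_)
            exact hkmono j i (by omega) (by omega)
          have memFp : (Fp⟦k i⟧ : 𝒟) ∈ ShA A (k i) := mem_ShA_self (hFT.1 hFp) (k i)
          have memTi : (Ti⟦k (i+1)⟧ : 𝒟) ∈ ShA A (k (i+1)) :=
            mem_ShA_self (hFT.2.1 hTi) (k (i+1))
          obtain ⟨M, π, σ, m₁, m₂, m₃, hDM, hDB⟩ := compose_steps hpend hD1
            (fun φ => vanish_ShA hA memFp memTi (by omega) φ)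
            (fun φ => hTowEi'.shift1.vanish hA memTi (by omega) φ)
            (fun φ => htowR.shift1.vanish hA memFp (by omega) φ)
          have hMtilt : M⟦-(k (i+1))⟧ ∈ tilt F T :=
            merged_mem_tilt hFT hFp hTi (by omega) hDB
          refine ⟨P, Fi, hFi, d, e, f', ?_, hTowP, hD2⟩
          refine TTower.append P (M⟦-(k (i+1))⟧) (k (i+1)) _ _ _ htt hki hMtilt
            (dist_of_isos hDM (Iso.refl _) (Iso.refl _)
              ((shiftIso M (-(k (i+1))) (k (i+1)) 0 (by ring) ≪≫ shiftZero' M).symm))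
        · -- no merge : commit the pending `F`-part, then the torsion part
          have htt2 : TTower (tilt F T) (Eo (i+1)) (k i - 1) := by
            refine TTower.append (Eo (i+1)) (Fp⟦(1:ℤ)⟧) (k i - 1) _ _ _ htt (by omega)
              (Fshift_mem_tilt hFT hFp)
              (dist_of_isos hpend (Iso.refl _) (Iso.refl _)
                ((shiftIso Fp 1 (k i - 1) (k i) (by ring)).symm))
          refine ⟨P, Fi, hFi, d, e, f', ?_, hTowP, hD2⟩
          exact TTower.append P Ti (k (i+1)) a b c htt2 (by omega)
            (T_mem_tilt hFT hTi) hD1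
  -- conclude
  obtain ⟨R, Fp, hFp, pf, pg, ph, htt, _, hpend⟩ := main (m - 1) (by omega)
  have hm1 : m - 1 + 1 = m := by omega
  have httE : TTower (tilt F T) (Eo (m - 1 + 1)) (k (m-1) - 1) := by
    refine TTower.append (Eo (m - 1 + 1)) (Fp⟦(1:ℤ)⟧) (k (m-1) - 1) _ _ _ htt (by omega)
      (Fshift_mem_tilt hFT hFp)
      (dist_of_isos hpend (Iso.refl _) (Iso.refl _)
        ((shiftIso Fp 1 (k (m-1) - 1) (k (m-1)) (by ring)).symm))
  rw [hm1] at httE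
  obtain ⟨m', k', Eo', Ao', f', g', h', hz', hEm', hdec', hmem', hdists', _⟩ := httE.pack
  exact ⟨m', k', Eo', Ao', f', g', h', hz', hEm', hdec', hmem', hdists'⟩

end Main

/-- The tilt of the heart of a bounded t-structure at a torsion pair is again the
heart of a bounded t-structure. -/
theorem tilt_isHeart (A F T : Set 𝒟) (hA : IsHeart A) (hFT : IsTorsionPair A F T) :
    IsHeart (tilt F T) :=
  tilt_isHeart' hA hFT

end BridgelandNotes
end

section
/- Let 𝒟 be a triangulated category and let 𝒜, ℬ ⊆ 𝒟 be hearts of bounded t-structures such that every object A ∈ 𝒜 fits into a distinguished triangle X → A → Y[1] → X[1] with X, Y ∈ ℬ (i.e., 𝒜 is contained in the extension closure ⟨ℬ, ℬ[1]⟩). Define 𝒯 := ℬ ∩ 𝒜 (objects lying in both ℬ and 𝒜) and ℱ := ℬ ∩ 𝒜[−1] (objects B of ℬ with B[1] ∈ 𝒜). Then (ℱ, 𝒯) is a torsion pair on ℬ, and 𝒜 equals the tilt ⟨ℱ[1], 𝒯⟩: an object E of 𝒟 lies in 𝒜 if and only if it admits a distinguished triangle F[1] → E → T → F[2] with F ∈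 ℱ and T ∈ 𝒯. -/
open CategoryTheory CategoryTheory.Limits CategoryTheory.Pretriangulated
open ZeroObject

set_option linter.unusedSectionVars false

namespace BridgelandNotes

variable {𝒟 : Type*} [Category 𝒟] [HasZeroObject 𝒟] [HasShift 𝒟 ℤ]
  [Preadditive 𝒟] [∀ n : ℤ, (CategoryTheory.shiftFunctor 𝒟 n).Additive]
  [Pretriangulated 𝒟]

lemma zero_src {X X' W : 𝒟} (e : X ≅ X') (h : ∀ g : X ⟶ W, g = 0) (f : X' ⟶ W) : f = 0 := by
  have h2 : e.hom ≫ f = 0 := h _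
  calc f = e.inv ≫ (e.hom ≫ f) := by simp
  _ = 0 := by rw [h2, comp_zero]

lemma zero_tgt {W W' X : 𝒟} (e : W ≅ W') (h : ∀ g : X ⟶ W, g = 0) (f : X ⟶ W') : f = 0 := by
  have h2 : f ≫ e.inv = 0 := h _
  calc f = (f ≫ e.inv) ≫ e.hom := by simp
  _ = 0 := by rw [h2, zero_comp]

noncomputable def shIso (X : 𝒟) (a b c : ℤ) (h : a + b = c) : (X⟦a⟧)⟦b⟧ ≅ X⟦c⟧ :=
  ((shiftFunctorAdd' 𝒟 a b c h).app X).symm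

lemma isZero_shift {X : 𝒟} (hX : IsZero X) (n : ℤ) : IsZero (X⟦n⟧) :=
  Functor.map_isZero _ hX

lemma shift_conj_src {X Z : 𝒟} {i : ℤ} (h : ∀ f : X ⟶ Z⟦(-i)⟧, f = 0) (φ : X⟦i⟧ ⟶ Z) :
    φ = 0 := by
  have adj := (shiftEquiv 𝒟 i).toAdjunction
  have h0 : adj.homEquiv X Z φ = 0 := h _
  have h1 := (adj.homEquiv X Z).symm_apply_apply φ
  rw [h0] at h1
  rw [← h1, Adjunction.homEquiv_counit, Functor.map_zero, zero_comp]; rfl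

lemma shift_conj_tgt {Z X : 𝒟} {i : ℤ} (h : ∀ f : Z⟦(-i)⟧ ⟶ X, f = 0) (φ : Z ⟶ X⟦i⟧) :
    φ = 0 := by
  have adj := (shiftEquiv' 𝒟 (-i) i (by ring)).toAdjunction
  have h0 : (adj.homEquiv Z X).symm φ = 0 := h _
  have h1 := (adj.homEquiv Z X).apply_symm_apply φ
  rw [h0] at h1
  rw [← h1, Adjunction.homEquiv_unit, Functor.map_zero, comp_zero]; rfl

lemma heart_van {C : Set 𝒟} (hC : IsHeart C) {X Y : 𝒟} (hX : X ∈ C) (hY : Y ∈ C)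
    {i j : ℤ} (hij : j < i) (f : X⟦i⟧ ⟶ Y⟦j⟧) : f = 0 := hC.2.2.1 X Y hX hY i j hij f

lemma heart_van₁ {C : Set 𝒟} (hC : IsHeart C) {X Y : 𝒟} (hX : X ∈ C) (hY : Y ∈ C)
    {j : ℤ} (hj : j < 0) (f : X ⟶ Y⟦j⟧) : f = 0 :=
  zero_src ((shiftFunctorZero 𝒟 ℤ).app X) (fun g => heart_van hC hX hY hj g) f

lemma heart_van₂ {C : Set 𝒟} (hC : IsHeart C) {X Y : 𝒟} (hX : X ∈ C) (hY : Y ∈ C)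
    {i : ℤ} (hi : 0 < i) (f : X⟦i⟧ ⟶ Y) : f = 0 :=
  zero_tgt ((shiftFunctorZero 𝒟 ℤ).app Y) (fun g => heart_van hC hX hY hi g) f

lemma tri_van_cov {T : Triangle 𝒟} (hT : T ∈ distTriang 𝒟) {W : 𝒟}
    (h₁ : ∀ f : W ⟶ T.obj₁, f = 0) (h₃ : ∀ f : W ⟶ T.obj₃, f = 0)
    (f : W ⟶ T.obj₂) : f = 0 := by
  obtain ⟨g, hg⟩ := Triangle.coyoneda_exact₂ T hT f (h₃ _)
  rw [hg, h₁ g, zero_comp]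

lemma tri_van_con {T : Triangle 𝒟} (hT : T ∈ distTriang 𝒟) {W : 𝒟}
    (h₁ : ∀ f : T.obj₁ ⟶ W, f = 0) (h₃ : ∀ f : T.obj₃ ⟶ W, f = 0)
    (f : T.obj₂ ⟶ W) : f = 0 := by
  obtain ⟨g, hg⟩ := Triangle.yoneda_exact₂ T hT f (h₁ _)
  rw [hg, h₃ g, comp_zero]

section VanA

variable {A B : Set 𝒟}

def Hext (A B : Set 𝒟) : Prop := ∀ E ∈ A, ∃ (X Y : 𝒟) (_ : X ∈ B) (_ : Y ∈ B)
      (f : X ⟶ E) (g : E ⟶ Y⟦(1 : ℤ)⟧) (h : Y⟦(1 : ℤ)⟧ ⟶ X⟦(1 : ℤ)⟧),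
      Triangle.mk f g h ∈ distTriang 𝒟

lemma vanA_src₀ (hB : IsHeart B) (hext : Hext A B) {X W : 𝒟} (hX : X ∈ A) (hW : W ∈ B)
    {j : ℤ} (hj : j < 0) (φ : X ⟶ W⟦j⟧) : φ = 0 := by
  obtain ⟨U, V, hU, hV, f, g, h, hT⟩ := hext X hX
  exact tri_van_con hT (fun f => heart_van₁ hB hU hW hj f)
    (fun f => heart_van hB hV hW (by omega) f) φ

lemma vanA_src (hB : IsHeart B) (hext : Hext A B) {X W : 𝒟} (hX : X ∈ A) (hW : W ∈ B)
    {i j : ℤ} (hij : j < i) (φ : X⟦i⟧ ⟶ W⟦j⟧) : φ = 0 := by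
  apply shift_conj_src
  intro f
  exact zero_tgt (shIso W j (-i) (j - i) (by omega)).symm
    (fun g => vanA_src₀ hB hext hX hW (by omega) g) f

lemma vanA_tgt₀ (hB : IsHeart B) (hext : Hext A B) {X W : 𝒟} (hX : X ∈ A) (hW : W ∈ B)
    {j : ℤ} (hj : 2 ≤ j) (φ : W⟦j⟧ ⟶ X) : φ = 0 := by
  obtain ⟨U, V, hU, hV, f, g, h, hT⟩ := hext X hX
  exact tri_van_cov hT (fun f => heart_van₂ hB hW hU (by omega) f)
    (fun f => heart_van hB hW hV (by omega) f) φ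

lemma vanA_tgt (hB : IsHeart B) (hext : Hext A B) {X W : 𝒟} (hX : X ∈ A) (hW : W ∈ B)
    {i j : ℤ} (hij : i + 2 ≤ j) (φ : W⟦j⟧ ⟶ X⟦i⟧) : φ = 0 := by
  apply shift_conj_tgt
  intro f
  exact zero_src (shIso W j (-i) (j - i) (by omega)).symm
    (fun g => vanA_tgt₀ hB hext hX hW (by omega) g) f

end VanA

inductive HasFilt (A : Set 𝒟) : List ℤ → 𝒟 → Prop
  | zero {E : 𝒟} (hE : IsZero E) : HasFilt A [] E
  | iso {l : List ℤ} {E E' : 𝒟} (e : E ≅ E') (hE : HasFilt A l E) : HasFilt A l E'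
  | cons {l : List ℤ} {E' E A' : 𝒟} {k : ℤ} (hA' : A' ∈ A) (hk : ∀ j ∈ l, k < j)
      (f : E' ⟶ E) (g : E ⟶ A'⟦(k : ℤ)⟧) (h : A'⟦k⟧ ⟶ E'⟦(1 : ℤ)⟧)
      (hT : Triangle.mk f g h ∈ distTriang 𝒟) (hE' : HasFilt A l E') :
      HasFilt A (l ++ [k]) E

namespace HasFilt

lemma pairwise {A : Set 𝒟} {l : List ℤ} {E : 𝒟} (h : HasFilt A l E) :
    l.Pairwise (· > ·) := by
  induction h with
  | zero hE => exact List.Pairwise.nil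
  | iso e hE ih => exact ih
  | cons hA' hk f g h hT hE' ih =>
    rw [List.pairwise_append]
    refine ⟨ih, List.pairwise_singleton _ _, fun a ha b hb => ?_⟩
    simp only [List.mem_singleton] at hb
    subst hb
    exact hk a ha

lemma isZero' {A : Set 𝒟} {l : List ℤ} {E : 𝒟} (h : HasFilt A l E) (hl : l = []) :
    IsZero E := by
  induction h with
  | zero hE => exact hE
  | iso e hE ih => exact (ih hl).of_iso e.symm
  | cons hA' hk f g h hT hE' ih => simp at hl

lemma concat_inv {A : Set 𝒟} {l₀ : List ℤ} {E : 𝒟} (h : HasFilt A l₀ E) :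
    ∀ (l : List ℤ) (k : ℤ), l₀ = l ++ [k] →
    ∃ (E' A' : 𝒟) (f : E' ⟶ E) (g : E ⟶ A'⟦k⟧) (h' : A'⟦k⟧ ⟶ E'⟦(1 : ℤ)⟧),
      A' ∈ A ∧ HasFilt A l E' ∧ Triangle.mk f g h' ∈ distTriang 𝒟 := by
  induction h with
  | zero hE => intro l k hl; exact absurd hl.symm (by simp)
  | iso e hE ih =>
    intro l k hl
    obtain ⟨E', A', f, g, h', hA', hF, hT⟩ := ih l k hl
    refine ⟨E', A', f ≫ e.hom, e.inv ≫ g, h', hA', hF, ?_⟩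
    refine isomorphic_distinguished _ hT _ ?_
    exact Triangle.isoMk _ _ (Iso.refl _) e.symm (Iso.refl _) (by simp [Triangle.mk]) (by simp [Triangle.mk]) (by simp [Triangle.mk])
  | cons hA' hk f g h hT hE' ih =>
    intro l k hl
    obtain ⟨rfl, hk2⟩ := List.append_inj' hl rfl
    obtain rfl : _ = k := by simpa using hk2
    exact ⟨_, _, f, g, h, hA', hE', hT⟩

lemma zero_from {A : Set 𝒟} {l : List ℤ} {E : 𝒟} (h : HasFilt A l E) {W : 𝒟}
    (hv : ∀ A' ∈ A, ∀ j ∈ l, ∀ f : A'⟦j⟧ ⟶ W, f = 0) : ∀ f : E ⟶ W, f = 0 := by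
  induction h with
  | zero hE => exact fun f => hE.eq_of_src f 0
  | iso e hE ih => exact fun f => zero_src e (ih hv) f
  | cons hA' hk f g h hT hE' ih =>
    intro φ
    have h1 : f ≫ φ = 0 := ih (fun A' hA' j hj => hv A' hA' j (List.mem_append_left _ hj)) _
    obtain ⟨v, hv'⟩ := Triangle.yoneda_exact₂ _ hT φ h1
    rw [hv', hv _ hA' _ (by simp) v]; exact comp_zero

lemma zero_to {A : Set 𝒟} {l : List ℤ} {E : 𝒟} (h : HasFilt A l E) {W : 𝒟}
    (hv : ∀ A' ∈ A, ∀ j ∈ l, ∀ f : W ⟶ A'⟦j⟧, f = 0) : ∀ f : W ⟶ E, f = 0 := by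
  induction h with
  | zero hE => exact fun f => hE.eq_of_tgt f 0
  | iso e hE ih => exact fun f => zero_tgt e (ih hv) f
  | cons hA' hk f g h hT hE' ih =>
    intro φ
    have h3 : φ ≫ g = 0 := hv _ hA' _ (by simp) _
    obtain ⟨w, hw⟩ := Triangle.coyoneda_exact₂ _ hT φ h3
    rw [hw, ih (fun A' hA' j hj => hv A' hA' j (List.mem_append_left _ hj)) w]; exact zero_comp

end HasFilt

lemma exists_filt {A : Set 𝒟} (hA : IsHeart A) (E : 𝒟) : ∃ l, HasFilt A l E := by
  obtain ⟨m, k, Eo, Ao, f, g, h, h0, hm, hdec, hmem, htri⟩ := hA.2.2.2 E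
  have hlt : ∀ j i : ℕ, i < j → j < m → k j < k i := by
    intro j
    induction j with
    | zero => omega
    | succ j ih =>
      intro i hi hjm
      have h1 : k (j + 1) < k j := hdec j hjm
      rcases Nat.lt_succ_iff_lt_or_eq.mp hi with h2 | h2
      · exact lt_trans h1 (ih i h2 (by omega))
      · subst h2; exact h1
  have key : ∀ j, j ≤ m → HasFilt A ((List.range j).map k) (Eo j) := by
    intro j
    induction j with
    | zero => intro _; exact HasFilt.zero h0
    | succ j ih =>
      intro hj
      have hf : HasFilt A ((List.range j).map k) (Eo j) := ih (by omega)
      have hc : HasFilt A (((List.range j).map k) ++ [k j]) (Eo (j + 1)) := by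
        refine HasFilt.cons (hmem j (by omega)) ?_ (f j) (g j) (h j) (htri j (by omega)) hf
        intro x hx
        simp only [List.mem_map, List.mem_range] at hx
        obtain ⟨i, hi, rfl⟩ := hx
        exact hlt j i hi (by omega)
      simpa [List.range_succ] using hc
  have := key m le_rfl
  rw [hm] at this
  exact ⟨_, this⟩

lemma trim_top {A : Set 𝒟} (hA : IsHeart A) {l₀ : List ℤ} {E : 𝒟} (h : HasFilt A l₀ E) :
    ∀ (k : ℤ) (l : List ℤ), l₀ = k :: l →
      (∀ A' ∈ A, ∀ f : A'⟦k⟧ ⟶ E, f = 0) → HasFilt A l E := by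
  induction h with
  | zero hE => intro k l hl _; simp at hl
  | iso e hE ih =>
    intro k l hl hv
    refine HasFilt.iso e (ih k l hl ?_)
    intro A' hA' f
    have h2 : f ≫ e.hom = 0 := hv A' hA' _
    calc f = (f ≫ e.hom) ≫ e.inv := by simp
    _ = 0 := by rw [h2, zero_comp]
  | @cons l' E' E₀ A'' k' hA'' hk f g h' hT hE' ih =>
    intro k l hl hv
    cases l' with
    | nil =>
      simp only [List.nil_append, List.cons.injEq] at hl
      obtain ⟨rfl, rfl⟩ := hl
      have hzE' : IsZero E' := hE'.isZero' rfl
      have hiso : IsIso g := (Triangle.isZero₁_iff_isIso₂ _ hT).1 hzE'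
      have hinv0 : inv g = 0 := hv _ hA'' (inv g)
      have : IsZero E₀ := by
        rw [IsZero.iff_id_eq_zero, ← IsIso.hom_inv_id g, hinv0, comp_zero]
      exact HasFilt.zero this
    | cons k₀ l₂ =>
      simp only [List.cons_append, List.cons.injEq] at hl
      obtain ⟨rfl, rfl⟩ := hl
      have hvE' : ∀ A₁ ∈ A, ∀ φ : A₁⟦k₀⟧ ⟶ E', φ = 0 := by
        intro A₁ hA₁ φ
        have h1 : φ ≫ f = 0 := hv A₁ hA₁ _
        obtain ⟨w, hw⟩ := Triangle.coyoneda_exact₂ _ (inv_rot_of_distTriang _ hT) φ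
          (by exact h1)
        have hw0 : w = 0 := by
          refine zero_tgt (shIso A'' k' (-1) (k' - 1) (by omega)).symm ?_ w
          intro ψ
          exact heart_van hA hA₁ hA'' (by have := hk k₀ (by simp); omega) ψ
        rw [hw, hw0, zero_comp]; rfl
      exact HasFilt.cons hA'' (fun j hj => hk j (List.mem_cons_of_mem _ hj)) f g h' hT
        (ih k₀ l₂ rfl hvE')

lemma trim_bot {A : Set 𝒟} (hA : IsHeart A) {l₀ : List ℤ} {E : 𝒟} (h : HasFilt A l₀ E) :
    ∀ (l : List ℤ) (k : ℤ), l₀ = l ++ [k] →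
      (∀ A' ∈ A, ∀ f : E ⟶ A'⟦k⟧, f = 0) → HasFilt A l E := by
  induction h with
  | zero hE => intro l k hl _; exact absurd hl.symm (by simp)
  | iso e hE ih =>
    intro l k hl hv
    refine HasFilt.iso e (ih l k hl ?_)
    intro A' hA' f
    have h2 : e.inv ≫ f = 0 := hv A' hA' _
    calc f = e.hom ≫ (e.inv ≫ f) := by simp
    _ = 0 := by rw [h2, comp_zero]
  | @cons l' E' E₀ A'' k' hA'' hk f g h' hT hE' ih =>
    intro l k hl hv
    obtain ⟨rfl, hk2⟩ := List.append_inj' hl rfl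
    obtain rfl : k' = k := by simpa using hk2
    have hg0 : g = 0 := hv _ hA'' g
    obtain ⟨u, hu⟩ := Triangle.yoneda_exact₂ _ (rot_of_distTriang _ hT) (𝟙 (A''⟦k'⟧))
      (by simp [hg0, Triangle.mk]; exact zero_comp)
    have hu0 : u = 0 := by
      apply shift_conj_src
      intro ψ
      refine hE'.zero_from ?_ ψ
      intro A₁ hA₁ j hj φ
      refine zero_tgt (shIso A'' k' (-1) (k' - 1) (by omega)).symm ?_ φ
      intro χ
      exact heart_van hA hA₁ hA'' (by have := hk j hj; omega) χ
    have hQ : IsZero (A''⟦k'⟧) := by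
      rw [IsZero.iff_id_eq_zero, hu]
      change (h' ≫ u) = 0
      rw [hu0]; exact comp_zero
    have : IsIso f := (Triangle.isZero₃_iff_isIso₁ _ hT).1 hQ
    exact HasFilt.iso (asIso f) hE'

lemma trim_top_all {A : Set 𝒟} (hA : IsHeart A) {E : 𝒟} (n : ℤ) :
    ∀ l : List ℤ, HasFilt A l E →
    (∀ A' ∈ A, ∀ j : ℤ, n ≤ j → ∀ f : A'⟦j⟧ ⟶ E, f = 0) →
    ∃ l', HasFilt A l' E ∧ (∀ j ∈ l', j < n) ∧ (∀ j ∈ l', j ∈ l)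
  | [], h, hv => ⟨[], h, by simp, by simp⟩
  | (k :: l), h, hv => by
    by_cases hkn : k < n
    · refine ⟨k :: l, h, ?_, fun j hj => hj⟩
      intro j hj
      rcases List.mem_cons.mp hj with rfl | hj
      · exact hkn
      · have hp := h.pairwise
        rw [List.pairwise_cons] at hp
        have := hp.1 j hj
        omega
    · have h' := trim_top hA h k l rfl (fun A' hA' f => hv A' hA' k (by omega) f)
      obtain ⟨l', h1, h2, h3⟩ := trim_top_all hA n l h' hv
      exact ⟨l', h1, h2, fun j hj => List.mem_cons_of_mem _ (h3 j hj)⟩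

lemma trim_bot_all {A : Set 𝒟} (hA : IsHeart A) {E : 𝒟} (n : ℤ) :
    ∀ l : List ℤ, HasFilt A l E →
    (∀ A' ∈ A, ∀ j : ℤ, j ≤ n → ∀ f : E ⟶ A'⟦j⟧, f = 0) →
    ∃ l', HasFilt A l' E ∧ (∀ j ∈ l', n < j) ∧ (∀ j ∈ l', j ∈ l) := by
  intro l
  induction l using List.reverseRecOn with
  | nil => intro h hv; exact ⟨[], h, by simp, by simp⟩
  | append_singleton l k ih =>
    intro h hv
    by_cases hkn : n < k
    · refine ⟨l ++ [k], h, ?_, fun j hj => hj⟩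
      intro j hj
      have hp := h.pairwise
      rw [List.pairwise_append] at hp
      rcases List.mem_append.mp hj with hj | hj
      · have := hp.2.2 j hj k (by simp)
        omega
      · simp only [List.mem_singleton] at hj
        omega
    · have h' := trim_bot hA h l k rfl (fun A' hA' f => hv A' hA' k (by omega) f)
      obtain ⟨l', h1, h2, h3⟩ := ih h' hv
      exact ⟨l', h1, h2, fun j hj => List.mem_append_left _ (h3 j hj)⟩

lemma filt_single_iso {C : Set 𝒟} {k : ℤ} {E : 𝒟} (h : HasFilt C [k] E) :
    ∃ A', A' ∈ C ∧ Nonempty (E ≅ A'⟦k⟧) := by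
  obtain ⟨E', A', f, g, h', hA', hF, hT⟩ := h.concat_inv [] k rfl
  have hz : IsZero E' := hF.isZero' rfl
  have : IsIso g := (Triangle.isZero₁_iff_isIso₂ _ hT).1 hz
  exact ⟨A', hA', ⟨asIso g⟩⟩

lemma mem_of_filt_single_zero {C : Set 𝒟} (hC : IsHeart C) {E : 𝒟}
    (h : HasFilt C [(0 : ℤ)] E) : E ∈ C := by
  obtain ⟨A', hA', ⟨e⟩⟩ := filt_single_iso h
  exact hC.2.1 (((shiftFunctorZero 𝒟 ℤ).app A').symm ≪≫ e.symm) hA'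

lemma mem_of_van {C : Set 𝒟} (hC : IsHeart C) {E : 𝒟}
    (hv₁ : ∀ A' ∈ C, ∀ j : ℤ, 1 ≤ j → ∀ f : A'⟦j⟧ ⟶ E, f = 0)
    (hv₂ : ∀ A' ∈ C, ∀ j : ℤ, j ≤ -1 → ∀ f : E ⟶ A'⟦j⟧, f = 0) : E ∈ C := by
  obtain ⟨l, hl⟩ := exists_filt hC E
  obtain ⟨l₁, h1, h2, _⟩ := trim_top_all hC 1 l hl hv₁
  obtain ⟨l₂, h3, h4, h5⟩ := trim_bot_all hC (-1) l₁ h1 hv₂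
  have hz : ∀ j ∈ l₂, j = 0 := fun j hj => by
    have := h4 j hj; have := h2 j (h5 j hj); omega
  match l₂, h3, hz with
  | [], h3, _ => exact hC.1 E (h3.isZero' rfl)
  | [a], h3, hz =>
    obtain rfl : a = 0 := hz a (by simp)
    exact mem_of_filt_single_zero hC h3
  | (a :: b :: t), h3, hz =>
    exfalso
    have hp := h3.pairwise
    rw [List.pairwise_cons] at hp
    have := hp.1 b (by simp)
    have := hz a (by simp)
    have := hz b (by simp)
    omega

lemma filt_two {C : Set 𝒟} (hC : IsHeart C) {E : 𝒟} (a : ℤ)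
    (hv₁ : ∀ A' ∈ C, ∀ j : ℤ, a + 1 ≤ j → ∀ f : A'⟦j⟧ ⟶ E, f = 0)
    (hv₂ : ∀ A' ∈ C, ∀ j : ℤ, j ≤ a - 2 → ∀ f : E ⟶ A'⟦j⟧, f = 0) :
    HasFilt C [] E ∨ HasFilt C [a] E ∨ HasFilt C [a - 1] E ∨ HasFilt C [a, a - 1] E := by
  obtain ⟨l, hl⟩ := exists_filt hC E
  obtain ⟨l₁, h1, h2, _⟩ := trim_top_all hC (a + 1) l hl hv₁
  obtain ⟨l₂, h3, h4, h5⟩ := trim_bot_all hC (a - 2) l₁ h1 hv₂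
  have hm : ∀ j ∈ l₂, j = a ∨ j = a - 1 := fun j hj => by
    have := h4 j hj; have := h2 j (h5 j hj); omega
  match l₂, h3, hm with
  | [], h3, _ => exact Or.inl h3
  | [x], h3, hm =>
    rcases hm x (by simp) with rfl | rfl
    · exact Or.inr (Or.inl h3)
    · exact Or.inr (Or.inr (Or.inl h3))
  | (x :: y :: t), h3, hm =>
    have hp := h3.pairwise
    rw [List.pairwise_cons] at hp
    have hxy := hp.1 y (by simp)
    have hx := hm x (by simp)
    have hy := hm y (by simp)
    have hxa : x = a := by omega
    have hya : y = a - 1 := by omega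
    match t, hm, hp with
    | [], _, _ =>
      refine Or.inr (Or.inr (Or.inr ?_))
      rw [← hya, ← hxa]
      exact h3
    | (z :: t'), hm, hp =>
      exfalso
      have hz := hm z (by simp)
      have hp2 := hp.2
      rw [List.pairwise_cons] at hp2
      have := hp2.1 z (by simp)
      omega

theorem heart_is_tilt' (A B : Set 𝒟) (hA : IsHeart A) (hB : IsHeart B)
    (hext : ∀ E ∈ A, ∃ (X Y : 𝒟) (_ : X ∈ B) (_ : Y ∈ B)
      (f : X ⟶ E) (g : E ⟶ Y⟦(1 : ℤ)⟧) (h : Y⟦(1 : ℤ)⟧ ⟶ X⟦(1 : ℤ)⟧),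
      Triangle.mk f g h ∈ distTriang 𝒟) :
    A = tilt {X : 𝒟 | X ∈ B ∧ X⟦(1 : ℤ)⟧ ∈ A} (B ∩ A) := by
  have hext' : Hext A B := hext
  ext E
  constructor
  · intro hE
    have hv₁ : ∀ B' ∈ B, ∀ j : ℤ, 1 + 1 ≤ j → ∀ f : B'⟦j⟧ ⟶ E, f = 0 := by
      intro B' hB' j hj φ
      exact zero_tgt ((shiftFunctorZero 𝒟 ℤ).app E)
        (fun χ => vanA_tgt hB hext' hE hB' (by omega) χ) φ
    have hv₂ : ∀ B' ∈ B, ∀ j : ℤ, j ≤ 1 - 2 → ∀ f : E ⟶ B'⟦j⟧, f = 0 := by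
      intro B' hB' j hj φ
      exact vanA_src₀ hB hext' hE hB' (by omega) φ
    have hz0F : (0 : 𝒟) ∈ {X : 𝒟 | X ∈ B ∧ X⟦(1 : ℤ)⟧ ∈ A} :=
      ⟨hB.1 _ (isZero_zero 𝒟), hA.1 _ (isZero_shift (isZero_zero 𝒟) 1)⟩
    have TT : Triangle.mk (0 : (0 : 𝒟)⟦(1 : ℤ)⟧ ⟶ E) (𝟙 E)
        (0 : E ⟶ ((0 : 𝒟)⟦(1 : ℤ)⟧)⟦(1 : ℤ)⟧) ∈ distTriang 𝒟 := by
      refine isomorphic_distinguished _ (contractible_distinguished₁ E) _ ?_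
      exact Triangle.isoMk _ _ ((isZero_shift (isZero_zero 𝒟) 1).iso (isZero_zero 𝒟))
        (Iso.refl _) (Iso.refl _) (by simp [Triangle.mk]) (by simp [Triangle.mk]) (by simp [Triangle.mk])
    rcases filt_two hB 1 hv₁ hv₂ with h3 | h3 | h3 | h3
    · exact ⟨0, E, hz0F, ⟨hB.1 _ (h3.isZero' rfl), hE⟩, 0, 𝟙 E, 0, TT⟩
    · obtain ⟨B₁, hB₁, ⟨e⟩⟩ := filt_single_iso h3
      refine ⟨B₁, 0, ⟨hB₁, hA.2.1 e hE⟩,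
        ⟨hB.1 _ (isZero_zero 𝒟), hA.1 _ (isZero_zero 𝒟)⟩, e.inv, 0, 0, ?_⟩
      refine isomorphic_distinguished _ (contractible_distinguished E) _ ?_
      exact Triangle.isoMk _ _ e.symm (Iso.refl _) (Iso.refl _) (by simp [Triangle.mk]; rfl)
          (IsZero.eq_of_tgt (isZero_zero 𝒟) _ _) (IsZero.eq_of_src (isZero_zero 𝒟) _ _)
    · have h3' : HasFilt B [(0 : ℤ)] E := by norm_num at h3; exact h3
      have hEB : E ∈ B := mem_of_filt_single_zero hB h3'
      exact ⟨0, E, hz0F, ⟨hEB, hE⟩, 0, 𝟙 E, 0, TT⟩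
    · have h3' : HasFilt B [(1 : ℤ), (0 : ℤ)] E := by norm_num at h3; exact h3
      obtain ⟨E', B₂, f, g, h', hB₂, hF, hT⟩ := h3'.concat_inv [(1 : ℤ)] 0 rfl
      obtain ⟨B₁, hB₁, ⟨e⟩⟩ := filt_single_iso hF
      have hT₂ : Triangle.mk (e.inv ≫ f) g
          (h' ≫ (shiftFunctor 𝒟 (1 : ℤ)).map e.hom) ∈ distTriang 𝒟 := by
        refine isomorphic_distinguished _ hT _ ?_
        exact Triangle.isoMk _ _ e.symm (Iso.refl _) (Iso.refl _) (by simp [Triangle.mk]) (by simp [Triangle.mk])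
          (by simp [← Functor.map_comp, Triangle.mk])
      have hB₁A : B₁⟦(1 : ℤ)⟧ ∈ A := by
        refine mem_of_van hA ?_ ?_
        · intro A' hA' j hj φ
          refine tri_van_cov (inv_rot_of_distTriang _ hT₂) ?_ ?_ φ
          · intro ψ
            exact zero_tgt (shIso B₂ 0 (-1) (-1) (by omega)).symm
              (fun χ => vanA_src hB hext' hA' hB₂ (by omega) χ) ψ
          · intro ψ
            exact zero_tgt ((shiftFunctorZero 𝒟 ℤ).app E)
              (fun χ => heart_van hA hA' hE (by omega) χ) ψ
        · intro A' hA' j hj φ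
          exact vanA_tgt hB hext' hA' hB₁ (by omega) φ
      have hYB : B₂⟦(0 : ℤ)⟧ ∈ B := hB.2.1 ((shiftFunctorZero 𝒟 ℤ).app B₂).symm hB₂
      have hYA : B₂⟦(0 : ℤ)⟧ ∈ A := by
        refine mem_of_van hA ?_ ?_
        · intro A' hA' j hj φ
          exact vanA_src hB hext' hA' hB₂ (by omega) φ
        · intro A' hA' j hj φ
          refine tri_van_con (rot_of_distTriang _ hT₂) ?_ ?_ φ
          · intro ψ
            exact heart_van₁ hA hE hA' (by omega) ψ
          · intro ψ
            exact zero_src (shIso B₁ 1 1 2 (by omega)).symm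
              (fun χ => vanA_tgt hB hext' hA' hB₁ (by omega) χ) ψ
      exact ⟨B₁, B₂⟦(0 : ℤ)⟧, ⟨hB₁, hB₁A⟩, ⟨hYB, hYA⟩, e.inv ≫ f, g,
        h' ≫ (shiftFunctor 𝒟 (1 : ℤ)).map e.hom, hT₂⟩
  · intro hE
    obtain ⟨X, Y, hXF, hYT, f, g, h, hT⟩ := hE
    refine mem_of_van hA ?_ ?_
    · intro A' hA' j hj φ
      refine tri_van_cov hT ?_ ?_ φ
      · intro ψ
        exact zero_tgt ((shiftFunctorZero 𝒟 ℤ).app (X⟦(1 : ℤ)⟧))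
          (fun χ => heart_van hA hA' hXF.2 (by omega) χ) ψ
      · intro ψ
        exact zero_tgt ((shiftFunctorZero 𝒟 ℤ).app Y)
          (fun χ => heart_van hA hA' hYT.2 (by omega) χ) ψ
    · intro A' hA' j hj φ
      refine tri_van_con hT ?_ ?_ φ
      · intro ψ
        exact heart_van₁ hA hXF.2 hA' (by omega) ψ
      · intro ψ
        exact heart_van₁ hA hYT.2 hA' (by omega) ψ

theorem torsion' (A B : Set 𝒟) (hA : IsHeart A) (hB : IsHeart B)
    (hext : ∀ E ∈ A, ∃ (X Y : 𝒟) (_ : X ∈ B) (_ : Y ∈ B)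
      (f : X ⟶ E) (g : E ⟶ Y⟦(1 : ℤ)⟧) (h : Y⟦(1 : ℤ)⟧ ⟶ X⟦(1 : ℤ)⟧),
      Triangle.mk f g h ∈ distTriang 𝒟) :
    ∀ E ∈ B, ∃ (X Y : 𝒟) (_ : X ∈ B ∩ A) (_ : Y ∈ {X : 𝒟 | X ∈ B ∧ X⟦(1 : ℤ)⟧ ∈ A})
      (f : X ⟶ E) (g : E ⟶ Y) (h : Y ⟶ X⟦(1 : ℤ)⟧),
      Triangle.mk f g h ∈ distTriang 𝒟 := by
  have hext' : Hext A B := hext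
  intro E hE
  have hv₁ : ∀ A' ∈ A, ∀ j : ℤ, 0 + 1 ≤ j → ∀ f : A'⟦j⟧ ⟶ E, f = 0 := by
    intro A' hA' j hj φ
    exact zero_tgt ((shiftFunctorZero 𝒟 ℤ).app E)
      (fun χ => vanA_src hB hext' hA' hE (by omega) χ) φ
  have hv₂ : ∀ A' ∈ A, ∀ j : ℤ, j ≤ 0 - 2 → ∀ f : E ⟶ A'⟦j⟧, f = 0 := by
    intro A' hA' j hj φ
    exact zero_src ((shiftFunctorZero 𝒟 ℤ).app E)
      (fun χ => vanA_tgt hB hext' hA' hE (by omega) χ) φ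
  have hz0Y : (0 : 𝒟) ∈ {X : 𝒟 | X ∈ B ∧ X⟦(1 : ℤ)⟧ ∈ A} :=
    ⟨hB.1 _ (isZero_zero 𝒟), hA.1 _ (isZero_shift (isZero_zero 𝒟) 1)⟩
  rcases filt_two hA 0 hv₁ hv₂ with h3 | h3 | h3 | h3
  · exact ⟨E, 0, ⟨hE, hA.1 _ (h3.isZero' rfl)⟩, hz0Y, 𝟙 E, 0, 0,
      contractible_distinguished E⟩
  · exact ⟨E, 0, ⟨hE, mem_of_filt_single_zero hA h3⟩, hz0Y, 𝟙 E, 0, 0,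
      contractible_distinguished E⟩
  · obtain ⟨A₂, hA₂, ⟨e⟩⟩ := filt_single_iso h3
    have hE1A : E⟦(1 : ℤ)⟧ ∈ A := by
      refine hA.2.1 (?_ : A₂ ≅ E⟦(1 : ℤ)⟧) hA₂
      exact ((shiftFunctorZero 𝒟 ℤ).app A₂).symm ≪≫ (shIso A₂ (0 - 1) 1 0 (by omega)).symm
        ≪≫ ((shiftFunctor 𝒟 (1 : ℤ)).mapIso e).symm
    exact ⟨0, E, ⟨hB.1 _ (isZero_zero 𝒟), hA.1 _ (isZero_zero 𝒟)⟩, ⟨hE, hE1A⟩,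
      0, 𝟙 E, 0, contractible_distinguished₁ E⟩
  · obtain ⟨E', A₂, f, g, h', hA₂, hF, hT⟩ := h3.concat_inv [(0 : ℤ)] (0 - 1) rfl
    have hXA : E' ∈ A := mem_of_filt_single_zero hA hF
    have hYs : (A₂⟦(0 : ℤ) - 1⟧)⟦(1 : ℤ)⟧ ∈ A :=
      hA.2.1 (((shiftFunctorZero 𝒟 ℤ).app A₂).symm ≪≫
        (shIso A₂ (0 - 1) 1 0 (by omega)).symm) hA₂
    have hXB : E' ∈ B := by
      refine mem_of_van hB ?_ ?_
      · intro B' hB' j hj φ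
        refine tri_van_cov (inv_rot_of_distTriang _ hT) ?_ ?_ φ
        · intro ψ
          exact zero_tgt (shIso A₂ (0 - 1) (-1) (0 - 2) (by omega)).symm
            (fun χ => vanA_tgt hB hext' hA₂ hB' (by omega) χ) ψ
        · intro ψ
          exact heart_van₂ hB hB' hE (by omega) ψ
      · intro B' hB' j hj φ
        exact vanA_src₀ hB hext' hXA hB' (by omega) φ
    have hYB : A₂⟦(0 : ℤ) - 1⟧ ∈ B := by
      refine mem_of_van hB ?_ ?_
      · intro B' hB' j hj φ
        exact vanA_tgt hB hext' hA₂ hB' (by omega) φ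
      · intro B' hB' j hj φ
        refine tri_van_con (rot_of_distTriang _ hT) ?_ ?_ φ
        · intro ψ
          exact heart_van₁ hB hE hB' (by omega) ψ
        · intro ψ
          exact vanA_src hB hext' hXA hB' (by omega) ψ
    exact ⟨E', A₂⟦(0 : ℤ) - 1⟧, ⟨hXB, hXA⟩, ⟨hYB, hYs⟩, f, g, h', hT⟩

/-- If `A` and `B` are hearts of bounded t-structures such that every object of `A`
is an extension of an object of `B` by a shift `B⟦1⟧` (i.e. `A ⊆ ⟨B, B[1]⟩`), then,
setting `𝒯 := B ∩ A` and `ℱ := B ∩ A[−1]`, the pair `(ℱ, 𝒯)` is a torsion pair on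
`B` and `A` is the corresponding tilt `⟨ℱ[1], 𝒯⟩`. -/
theorem heart_is_tilt (A B : Set 𝒟) (hA : IsHeart A) (hB : IsHeart B)
    (hext : ∀ E ∈ A, ∃ (X Y : 𝒟) (_ : X ∈ B) (_ : Y ∈ B)
      (f : X ⟶ E) (g : E ⟶ Y⟦(1 : ℤ)⟧) (h : Y⟦(1 : ℤ)⟧ ⟶ X⟦(1 : ℤ)⟧),
      Triangle.mk f g h ∈ distTriang 𝒟) :
    IsTorsionPair B {X : 𝒟 | X ∈ B ∧ X⟦(1 : ℤ)⟧ ∈ A} (B ∩ A) ∧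
    A = tilt {X : 𝒟 | X ∈ B ∧ X⟦(1 : ℤ)⟧ ∈ A} (B ∩ A) := by
  constructor
  · refine ⟨fun X hX => hX.1, fun X hX => hX.1, ?_, ?_, torsion' A B hA hB hext⟩
    · intro Z hZ
      exact ⟨⟨hB.1 Z hZ, hA.1 _ (isZero_shift hZ 1)⟩, hB.1 Z hZ, hA.1 Z hZ⟩
    · intro X Y hX hY f
      have h1 : (shiftFunctor 𝒟 (1 : ℤ)).map f = 0 :=
        zero_tgt ((shiftFunctorZero 𝒟 ℤ).app (Y⟦(1 : ℤ)⟧))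
          (fun χ => heart_van hA hX.2 hY.2 one_pos χ) _
      exact (shiftFunctor 𝒟 (1 : ℤ)).map_injective (by rw [h1, Functor.map_zero])
  · exact heart_is_tilt' A B hA hB hext

end BridgelandNotes
end

section
/- Let h > 0 and let v, w ∈ ℝ³ be linearly independent. If the numerical wall W_w(v) is nonempty, then either there exist s ∈ ℝ and ρ > 0 such that W_w(v) = {(α, β) : α > 0 and α² + (β − s)² = ρ²} (a semicircle with center (0, s) on the β-axis), or there exists β₀ ∈ ℝ such that W_w(v) = {(α, β₀) : α > 0} (a vertical ray). -/
/-!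
Expanding the central charges, `Re Z(v)·Im Z(w) − Re Z(w)·Im Z(v)` equals `α` times
`(h/2)·z·(α² + β²) + h·y·β + x`, where `(x, y, z) = v × w` is the cross product. On `α > 0`
the wall is therefore the zero set of this polynomial: a circle centred on the `β`-axis when
`z ≠ 0`, a vertical line when `z = 0 ≠ y`. Linear independence makes `v × w ≠ 0`, and
nonemptiness of the wall then rules out `y = z = 0`.
-/

namespace BridgelandNotes

/-- The central charge `Z_{α,β}(v)` for `v = (r, c, d)`, where `h` plays the role of
`H²`:  `Z_{α,β}(v) = (−d + β·c + ((α² − β²)/2)·h·r) + i·α·(c − β·h·r)`. -/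
noncomputable def centralCharge (h : ℝ) (v : ℝ × ℝ × ℝ) (α β : ℝ) : ℂ :=
  ⟨-v.2.2 + β * v.2.1 + ((α ^ 2 - β ^ 2) / 2) * h * v.1,
    α * (v.2.1 - β * h * v.1)⟩

/-- The numerical wall `W_w(v)` in the `(α, β)`-plane:
`{(α, β) : α > 0 and Re Z_{α,β}(v)·Im Z_{α,β}(w) = Re Z_{α,β}(w)·Im Z_{α,β}(v)}`. -/
noncomputable def numericalWall (h : ℝ) (v w : ℝ × ℝ × ℝ) : Set (ℝ × ℝ) :=
  {p : ℝ × ℝ | 0 < p.1 ∧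
    (centralCharge h v p.1 p.2).re * (centralCharge h w p.1 p.2).im =
      (centralCharge h w p.1 p.2).re * (centralCharge h v p.1 p.2).im}

/-- The discriminant `Δ̄(v) = c² − 2·h·r·d` for `v = (r, c, d)`. -/
def disc (h : ℝ) (v : ℝ × ℝ × ℝ) : ℝ := v.2.1 ^ 2 - 2 * h * v.1 * v.2.2

open Matrix

def tripleEquivFin3 (R : Type*) [Semiring R] : (R × R × R) ≃ₗ[R] (Fin 3 → R) where
  toFun v := ![v.1, v.2.1, v.2.2]
  invFun x := (x 0, x 1, x 2)
  map_add' _ _ := by ext i; fin_cases i <;> rfl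
  map_smul' _ _ := by ext i; fin_cases i <;> rfl
  left_inv _ := rfl
  right_inv x := by ext i; fin_cases i <;> rfl

@[simp]
lemma tripleEquivFin3_apply {R : Type*} [Semiring R] (v : R × R × R) :
    tripleEquivFin3 R v = ![v.1, v.2.1, v.2.2] :=
  rfl

def tripleCross {R : Type*} [CommRing R] (v w : R × R × R) : Fin 3 → R :=
  tripleEquivFin3 R v ⨯₃ tripleEquivFin3 R w

lemma tripleCross_ne_zero {F : Type*} [Field F] {v w : F × F × F}
    (hvw : LinearIndependent F ![v, w]) : tripleCross v w ≠ 0 := by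
  refine crossProduct_ne_zero_iff_linearIndependent.2 ?_
  have hcomp : ![tripleEquivFin3 F v, tripleEquivFin3 F w] = tripleEquivFin3 F ∘ ![v, w] := by
    ext i : 1
    fin_cases i <;> rfl
  rw [hcomp]
  exact hvw.map' _ (tripleEquivFin3 F).ker

def upperHalfQuadric (A B C : ℝ) : Set (ℝ × ℝ) :=
  {p | 0 < p.1 ∧ A * (p.1 ^ 2 + p.2 ^ 2) + B * p.2 + C = 0}

lemma centralCharge_re_mul_im_sub (h : ℝ) (v w : ℝ × ℝ × ℝ) (α β : ℝ) :
    (centralCharge h v α β).re * (centralCharge h w α β).im -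
        (centralCharge h w α β).re * (centralCharge h v α β).im =
      α * (h / 2 * tripleCross v w 2 * (α ^ 2 + β ^ 2) + h * tripleCross v w 1 * β +
        tripleCross v w 0) := by
  simp only [centralCharge, tripleCross, tripleEquivFin3_apply, cross_apply, cons_val_zero,
    cons_val_one, cons_val]
  ring

lemma numericalWall_eq_upperHalfQuadric (h : ℝ) (v w : ℝ × ℝ × ℝ) :
    numericalWall h v w = upperHalfQuadric (h / 2 * tripleCross v w 2)
      (h * tripleCross v w 1) (tripleCross v w 0) := by
  ext ⟨α, β⟩
  simp only [numericalWall, upperHalfQuadric, Set.mem_ofPred_eq, and_congr_right_iff]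
  intro hα
  rw [← sub_eq_zero, centralCharge_re_mul_im_sub, mul_eq_zero, or_iff_right hα.ne']

lemma upperHalfQuadric_eq_semicircle {A B C : ℝ} (hA : A ≠ 0)
    (hne : (upperHalfQuadric A B C).Nonempty) :
    ∃ s ρ : ℝ, 0 < ρ ∧
      upperHalfQuadric A B C = {p : ℝ × ℝ | 0 < p.1 ∧ p.1 ^ 2 + (p.2 - s) ^ 2 = ρ ^ 2} := by
  set s := -B / (2 * A)
  set R := s ^ 2 - C / A
  have hcomplete (α β : ℝ) :
      A * (α ^ 2 + β ^ 2) + B * β + C = A * (α ^ 2 + (β - s) ^ 2 - R) := by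
    simp only [s, R]
    field_simp
    ring
  have hmem (p : ℝ × ℝ) :
      p ∈ upperHalfQuadric A B C ↔ 0 < p.1 ∧ p.1 ^ 2 + (p.2 - s) ^ 2 = R := by
    simp only [upperHalfQuadric, Set.mem_ofPred_eq, hcomplete, mul_eq_zero, hA, false_or,
      sub_eq_zero]
  obtain ⟨p, hp⟩ := hne
  have hR : 0 < R := by
    obtain ⟨hα, hcircle⟩ := (hmem p).1 hp
    rw [← hcircle]
    positivity
  refine ⟨s, √R, Real.sqrt_pos.2 hR, ?_⟩
  ext p
  rw [hmem, Real.sq_sqrt hR.le]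
  rfl

lemma upperHalfQuadric_zero_left {B : ℝ} (C : ℝ) (hB : B ≠ 0) :
    upperHalfQuadric 0 B C = {p : ℝ × ℝ | 0 < p.1 ∧ p.2 = -C / B} := by
  ext p
  simp only [upperHalfQuadric, Set.mem_ofPred_eq, zero_mul, zero_add, eq_div_iff hB,
    eq_neg_iff_add_eq_zero, mul_comm B]

lemma upperHalfQuadric_semicircle_or_vertical {A B C : ℝ} (hABC : A ≠ 0 ∨ B ≠ 0 ∨ C ≠ 0)
    (hne : (upperHalfQuadric A B C).Nonempty) :
    (∃ s ρ : ℝ, 0 < ρ ∧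
      upperHalfQuadric A B C = {p : ℝ × ℝ | 0 < p.1 ∧ p.1 ^ 2 + (p.2 - s) ^ 2 = ρ ^ 2}) ∨
    (∃ β₀ : ℝ, upperHalfQuadric A B C = {p : ℝ × ℝ | 0 < p.1 ∧ p.2 = β₀}) := by
  by_cases hA : A = 0
  · subst hA
    by_cases hB : B = 0
    · subst hB
      obtain ⟨p, -, hp⟩ := hne
      simp_all
    · exact .inr ⟨_, upperHalfQuadric_zero_left C hB⟩
  · exact .inl (upperHalfQuadric_eq_semicircle hA hne)

/-- Every nonempty numerical wall is either a semicircle with center on the `β`-axis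
or a vertical ray. -/
theorem numericalWall_semicircle_or_vertical (h : ℝ) (hh : 0 < h)
    (v w : ℝ × ℝ × ℝ) (hvw : LinearIndependent ℝ ![v, w])
    (hne : (numericalWall h v w).Nonempty) :
    (∃ s ρ : ℝ, 0 < ρ ∧
      numericalWall h v w =
        {p : ℝ × ℝ | 0 < p.1 ∧ p.1 ^ 2 + (p.2 - s) ^ 2 = ρ ^ 2}) ∨
    (∃ β₀ : ℝ, numericalWall h v w = {p : ℝ × ℝ | 0 < p.1 ∧ p.2 = β₀}) := by
  rw [numericalWall_eq_upperHalfQuadric] at hne ⊢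
  refine upperHalfQuadric_semicircle_or_vertical ?_ hne
  have hcross := tripleCross_ne_zero hvw
  contrapose! hcross
  obtain ⟨h₂, h₁, h₀⟩ := hcross
  ext i
  fin_cases i <;> simp_all [hh.ne']

end BridgelandNotes
end

section
/- Let h > 0, let v ∈ ℝ³ be nonzero with Δ̄(v) ≥ 0, and let w₁, w₂ ∈ ℝ³ be such that {v, w₁} and {v, w₂} are each linearly independent. If the numerical walls W_{w₁}(v) and W_{w₂}(v) have a common point, then W_{w₁}(v) = W_{w₂}(v). In other words, two different numerical walls for v cannot intersect. -/
namespace BridgelandNotes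

/-!
Up to the factor `α`, `Re Z(v)·Im Z(w) − Re Z(w)·Im Z(v)` is the pairing of the cross product
`v × w` with `q(α, β) = (1, hβ, h(α² + β²)/2)`, so `W_w(v)` is cut out by the normal vector
`v × w`, which is orthogonal to `v`. At a common point `(α, β)` both normals `v × w₁` and
`v × w₂` are also orthogonal to `q(α, β)`. The quadratic form `Δ̄` has `Δ̄(q(α, β)) = −h²α² < 0`
while `Δ̄(v) ≥ 0` and `v ≠ 0`, so `q(α, β)` is not proportional to `v`; hence both normals are
nonzero multiples of `v × q(α, β)`.
-/

open Matrix

def prodToFin3 {R : Type*} [Semiring R] : R × R × R →ₗ[R] Fin 3 → R where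
  toFun v := ![v.1, v.2.1, v.2.2]
  map_add' _ _ := by ext i; fin_cases i <;> rfl
  map_smul' _ _ := by ext i; fin_cases i <;> rfl

theorem prodToFin3_injective {R : Type*} [Semiring R] :
    Function.Injective (prodToFin3 (R := R)) :=
  fun _ _ hvw ↦ Prod.ext (congrFun hvw 0) (Prod.ext (congrFun hvw 1) (congrFun hvw 2))

theorem linearIndependent_prodToFin3_pair {R : Type*} [Ring R] {v w : R × R × R}
    (hvw : LinearIndependent R ![v, w]) :
    LinearIndependent R ![prodToFin3 v, prodToFin3 w] := by
  have h := hvw.map' prodToFin3 (LinearMap.ker_eq_bot.mpr prodToFin3_injective)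
  rwa [show prodToFin3 ∘ ![v, w] = ![prodToFin3 v, prodToFin3 w] by
    ext i : 1; fin_cases i <;> rfl] at h

theorem eq_smul_cross_of_dotProduct_eq_zero {F : Type*} [Field F] {m q x : Fin 3 → F}
    (hmq : LinearIndependent F ![m, q]) (hm : x ⬝ᵥ m = 0) (hq : x ⬝ᵥ q = 0) :
    ∃ c : F, x = c • (m ⨯₃ q) := by
  have hx : m ⨯₃ q ⨯₃ x = 0 := by
    rw [← cross_anticomm, cross_cross_eq_smul_sub_smul', hq, dotProduct_comm, hm,
      zero_smul, zero_smul, sub_zero, neg_zero]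
  have hdep : ¬ LinearIndependent F ![m ⨯₃ q, x] :=
    crossProduct_ne_zero_iff_linearIndependent.not_right.mp hx
  rw [LinearIndependent.pair_iff' (crossProduct_ne_zero_iff_linearIndependent.mpr hmq)] at hdep
  obtain ⟨c, hc⟩ := not_forall_not.mp hdep
  exact ⟨c, hc.symm⟩

noncomputable def wallPoint (h α β : ℝ) : Fin 3 → ℝ := ![1, h * β, h * ((α ^ 2 + β ^ 2) / 2)]

def wallOfNormal (h : ℝ) (n : Fin 3 → ℝ) : Set (ℝ × ℝ) :=
  {p | 0 < p.1 ∧ n ⬝ᵥ wallPoint h p.1 p.2 = 0}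

theorem wallOfNormal_smul (h : ℝ) {c : ℝ} (hc : c ≠ 0) (n : Fin 3 → ℝ) :
    wallOfNormal h (c • n) = wallOfNormal h n := by
  ext p
  simp only [wallOfNormal, Set.mem_ofPred_eq, smul_dotProduct, smul_eq_mul, mul_eq_zero,
    hc, false_or]

theorem re_mul_im_sub_re_mul_im_centralCharge (h : ℝ) (v w : ℝ × ℝ × ℝ) (α β : ℝ) :
    (centralCharge h v α β).re * (centralCharge h w α β).im
        - (centralCharge h w α β).re * (centralCharge h v α β).im
      = α * (prodToFin3 v ⨯₃ prodToFin3 w ⬝ᵥ wallPoint h α β) := by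
  simp only [centralCharge, prodToFin3, wallPoint, LinearMap.coe_mk, AddHom.coe_mk,
    cross_apply, vec3_dotProduct, cons_val_zero, cons_val_one, cons_val]
  ring

theorem numericalWall_eq_wallOfNormal (h : ℝ) (v w : ℝ × ℝ × ℝ) :
    numericalWall h v w = wallOfNormal h (prodToFin3 v ⨯₃ prodToFin3 w) := by
  ext ⟨α, β⟩
  refine and_congr_right fun hα ↦ ?_
  rw [← sub_eq_zero, re_mul_im_sub_re_mul_im_centralCharge, mul_eq_zero_iff_left hα.ne']

theorem wallPoint_ne_zero (h α β : ℝ) : wallPoint h α β ≠ 0 :=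
  fun hq ↦ one_ne_zero (congrFun hq 0)

theorem disc_of_prodToFin3_eq_smul_wallPoint {h α β a : ℝ} {v : ℝ × ℝ × ℝ}
    (hv : prodToFin3 v = a • wallPoint h α β) : disc h v = -(a * h * α) ^ 2 := by
  obtain ⟨r, c, d⟩ := v
  have hr : r = a := by simpa [prodToFin3, wallPoint] using congrFun hv 0
  have hc : c = a * (h * β) := by simpa [prodToFin3, wallPoint] using congrFun hv 1
  have hd : d = a * (h * ((α ^ 2 + β ^ 2) / 2)) := by
    simpa [prodToFin3, wallPoint] using congrFun hv 2
  simp only [disc, hr, hc, hd]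
  ring

theorem linearIndependent_prodToFin3_wallPoint {h α β : ℝ} (hh : h ≠ 0) (hα : α ≠ 0)
    {v : ℝ × ℝ × ℝ} (hv : v ≠ 0) (hdisc : 0 ≤ disc h v) :
    LinearIndependent ℝ ![prodToFin3 v, wallPoint h α β] := by
  rw [LinearIndependent.pair_symm_iff, LinearIndependent.pair_iff' (wallPoint_ne_zero h α β)]
  intro a ha
  have hdisc_eq := disc_of_prodToFin3_eq_smul_wallPoint ha.symm
  have ha0 : a = 0 := by
    have : a * h * α = 0 := by nlinarith [sq_nonneg (a * h * α)]
    simpa [hh, hα] using this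
  rw [ha0, zero_smul, ← map_zero prodToFin3] at ha
  exact hv (prodToFin3_injective ha).symm

theorem numericalWall_eq_wallOfNormal_of_mem {h α β : ℝ} (hh : h ≠ 0) {v w : ℝ × ℝ × ℝ}
    (hv : v ≠ 0) (hdisc : 0 ≤ disc h v) (hvw : LinearIndependent ℝ ![v, w])
    (hp : (α, β) ∈ numericalWall h v w) :
    numericalWall h v w = wallOfNormal h (prodToFin3 v ⨯₃ wallPoint h α β) := by
  rw [numericalWall_eq_wallOfNormal] at hp ⊢
  obtain ⟨hα, hq⟩ := hp
  obtain ⟨c, hc⟩ := eq_smul_cross_of_dotProduct_eq_zero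
    (linearIndependent_prodToFin3_wallPoint hh hα.ne' hv hdisc)
    (by rw [dotProduct_comm, dot_self_cross]) hq
  have hcross : prodToFin3 v ⨯₃ prodToFin3 w ≠ 0 :=
    crossProduct_ne_zero_iff_linearIndependent.mpr (linearIndependent_prodToFin3_pair hvw)
  have hc0 : c ≠ 0 := by
    rintro rfl
    exact hcross (by rw [hc, zero_smul])
  rw [hc, wallOfNormal_smul h hc0]

/-- Two different numerical walls for a fixed class `v` with `Δ̄(v) ≥ 0` cannot
intersect: if two numerical walls for `v` have a common point, they coincide. -/
theorem numericalWall_disjoint_or_eq (h : ℝ) (hh : 0 < h)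
    (v : ℝ × ℝ × ℝ) (hv : v ≠ 0) (hdisc : 0 ≤ disc h v)
    (w₁ w₂ : ℝ × ℝ × ℝ)
    (h₁ : LinearIndependent ℝ ![v, w₁]) (h₂ : LinearIndependent ℝ ![v, w₂])
    (hmeet : (numericalWall h v w₁ ∩ numericalWall h v w₂).Nonempty) :
    numericalWall h v w₁ = numericalWall h v w₂ := by
  obtain ⟨⟨α, β⟩, hp₁, hp₂⟩ := hmeet
  rw [numericalWall_eq_wallOfNormal_of_mem hh.ne' hv hdisc h₁ hp₁,
    numericalWall_eq_wallOfNormal_of_mem hh.ne' hv hdisc h₂ hp₂]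

end BridgelandNotes
end

section
/- Let h > 0 and let v, w ∈ ℝ³ be linearly independent, and suppose the numerical wall W_w(v) is the semicircle {(α, β) : α > 0 and α² + (β − s)² = ρ²} for some s ∈ ℝ and ρ > 0. Then Re Z_{ρ,s}(v) = 0; that is, the curve Re Z_{α,β}(v) = 0 passes through the top point (α, β) = (ρ, s) of the semicircular wall. If moreover v ≠ 0 and Δ̄(v) ≥ 0, then (ρ, s) is the unique point (α, β) of W_w(v) at which Re Z_{α,β}(v) = 0. -/
/-!
Writing `v = (r, c, d)`, one has `Re Z(v) Im Z(w) - Re Z(w) Im Z(v) = α (K (α² + β²) + B β + C)`,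
so a semicircular wall of centre `s` and radius `ρ` forces `B = -2 K s`, `C = K (s² - ρ²)` with
`K ≠ 0`, and these two relations make `K · Re Z_{ρ,s}(v)` vanish identically.
On the semicircle, `Re Z_{α,β}(v) - Re Z_{ρ,s}(v) = (β - s)(c - β h r)`, so a second zero of
`Re Z(v)` on the wall has `c = β h r`; then `Δ̄(v) = -(h r α)²`, which is negative unless `v = 0`.
-/

namespace BridgelandNotes

-- The wall is the zero set of `K (α² + β²) + B β + C` in `α > 0`, see `re_mul_im_sub_re_mul_im`.
noncomputable def wallK (h : ℝ) (v w : ℝ × ℝ × ℝ) : ℝ := h * (v.1 * w.2.1 - w.1 * v.2.1) / 2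

def wallB (h : ℝ) (v w : ℝ × ℝ × ℝ) : ℝ := h * (v.2.2 * w.1 - w.2.2 * v.1)

def wallC (v w : ℝ × ℝ × ℝ) : ℝ := w.2.2 * v.2.1 - v.2.2 * w.2.1

theorem re_mul_im_sub_re_mul_im (h : ℝ) (v w : ℝ × ℝ × ℝ) (α β : ℝ) :
    (centralCharge h v α β).re * (centralCharge h w α β).im -
        (centralCharge h w α β).re * (centralCharge h v α β).im =
      α * (wallK h v w * (α ^ 2 + β ^ 2) + wallB h v w * β + wallC v w) := by
  simp only [centralCharge, wallK, wallB, wallC]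
  ring

theorem mem_numericalWall_iff {h : ℝ} {v w : ℝ × ℝ × ℝ} {p : ℝ × ℝ} :
    p ∈ numericalWall h v w ↔
      0 < p.1 ∧ wallK h v w * (p.1 ^ 2 + p.2 ^ 2) + wallB h v w * p.2 + wallC v w = 0 := by
  refine and_congr_right fun hα => ?_
  rw [← sub_eq_zero, re_mul_im_sub_re_mul_im, mul_eq_zero, or_iff_right hα.ne']

theorem coeffs_eq_of_zeroSet_eq_semicircle {K B C s ρ : ℝ} (hρ : 0 < ρ)
    (hzero : ∀ α β : ℝ, 0 < α →
      (K * (α ^ 2 + β ^ 2) + B * β + C = 0 ↔ α ^ 2 + (β - s) ^ 2 = ρ ^ 2)) :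
    K ≠ 0 ∧ B = -2 * K * s ∧ C = K * (s ^ 2 - ρ ^ 2) := by
  have top := (hzero ρ s hρ).mpr (by ring)
  -- two more points of the semicircle, symmetric about the axis `β = s`
  have upper := (hzero (4 * ρ / 5) (s + 3 * ρ / 5) (by positivity)).mpr (by ring)
  have lower := (hzero (4 * ρ / 5) (s - 3 * ρ / 5) (by positivity)).mpr (by ring)
  have hB : B = -2 * K * s := by
    have : 6 * ρ / 5 * (B + 2 * K * s) = 0 := by linear_combination upper - lower
    linarith [(mul_eq_zero.mp this).resolve_left (by positivity)]
  have hC : C = K * (s ^ 2 - ρ ^ 2) := by linear_combination top - s * hB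
  refine ⟨fun hK => ?_, hB, hC⟩
  have := (hzero (2 * ρ) s (by positivity)).mp (by rw [hB, hC, hK]; ring)
  nlinarith

theorem wallK_mul_re_centralCharge_eq_zero {h : ℝ} {v w : ℝ × ℝ × ℝ} {s ρ : ℝ}
    (hB : wallB h v w = -2 * wallK h v w * s)
    (hC : wallC v w = wallK h v w * (s ^ 2 - ρ ^ 2)) :
    wallK h v w * (centralCharge h v ρ s).re = 0 := by
  simp only [wallK, wallB, wallC, centralCharge] at hB hC ⊢
  linear_combination (v.2.1 / 2) * hB + (h * v.1 / 2) * hC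

theorem re_centralCharge_sub_re_top (h : ℝ) (v : ℝ × ℝ × ℝ) {α β s ρ : ℝ}
    (hcirc : α ^ 2 + (β - s) ^ 2 = ρ ^ 2) :
    (centralCharge h v α β).re - (centralCharge h v ρ s).re =
      (β - s) * (v.2.1 - β * h * v.1) := by
  simp only [centralCharge]
  linear_combination (h * v.1 / 2) * hcirc

theorem disc_eq_neg_sq {h : ℝ} {v : ℝ × ℝ × ℝ} {α β s ρ : ℝ}
    (hcirc : α ^ 2 + (β - s) ^ 2 = ρ ^ 2) (htop : (centralCharge h v ρ s).re = 0)
    (him : v.2.1 = β * h * v.1) :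
    disc h v = -(h * v.1 * α) ^ 2 := by
  simp only [disc, centralCharge] at htop ⊢
  rw [him] at htop ⊢
  linear_combination (2 * h * v.1) * htop + (h * v.1) ^ 2 * hcirc

theorem eq_top_of_re_centralCharge_eq_zero {h : ℝ} (hh : h ≠ 0) {v : ℝ × ℝ × ℝ} (hv : v ≠ 0)
    (hΔ : 0 ≤ disc h v) {α β s ρ : ℝ} (hρ : 0 < ρ) (hα : 0 < α)
    (hcirc : α ^ 2 + (β - s) ^ 2 = ρ ^ 2) (htop : (centralCharge h v ρ s).re = 0)
    (hre : (centralCharge h v α β).re = 0) :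
    (α, β) = (ρ, s) := by
  have hfac := re_centralCharge_sub_re_top h v hcirc
  rw [hre, htop, sub_zero, eq_comm, mul_eq_zero] at hfac
  rcases hfac with hβs | him
  · have hβ : β = s := sub_eq_zero.mp hβs
    have hα' : α = ρ := by
      subst hβ
      nlinarith
    rw [hα', hβ]
  · rw [sub_eq_zero] at him
    have hr : v.1 = 0 := by
      have := disc_eq_neg_sq hcirc htop him
      have : h * v.1 * α = 0 := by nlinarith [sq_nonneg (h * v.1 * α)]
      simpa [hh, hα.ne'] using this
    have hc : v.2.1 = 0 := by rw [him, hr, mul_zero]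
    have hd : v.2.2 = 0 := by
      simp only [centralCharge, hr, hc] at htop
      linarith
    exact absurd (Prod.ext hr (Prod.ext hc hd)) hv

theorem re_centralCharge_vanishes_at_top_general (h : ℝ)
    (v w : ℝ × ℝ × ℝ) (s ρ : ℝ) (hρ : 0 < ρ)
    (hW : numericalWall h v w =
      {p : ℝ × ℝ | 0 < p.1 ∧ p.1 ^ 2 + (p.2 - s) ^ 2 = ρ ^ 2}) :
    (centralCharge h v ρ s).re = 0 ∧
      (v ≠ 0 → 0 ≤ disc h v →
        ∀ p ∈ numericalWall h v w, (centralCharge h v p.1 p.2).re = 0 → p = (ρ, s)) := by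
  obtain ⟨hK, hB, hC⟩ := coeffs_eq_of_zeroSet_eq_semicircle hρ fun α β hα =>
    and_congr_right_iff.mp (by
      simpa only [mem_numericalWall_iff, Set.mem_ofPred_eq] using Set.ext_iff.mp hW (α, β)) hα
  have hh : h ≠ 0 := fun h0 => hK (by simp [wallK, h0])
  have htop := (mul_eq_zero.mp (wallK_mul_re_centralCharge_eq_zero hB hC)).resolve_left hK
  refine ⟨htop, fun hv hΔ p hp hre => ?_⟩
  rw [hW] at hp
  exact eq_top_of_re_centralCharge_eq_zero hh hv hΔ hρ hp.1 hp.2 htop hre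

/-- The curve `Re Z_{α,β}(v) = 0` passes through the top point `(ρ, s)` of every
semicircular numerical wall for `v`; if moreover `v ≠ 0` and `Δ̄(v) ≥ 0`, then the
top point is the unique point of the wall where `Re Z_{α,β}(v)` vanishes. -/
theorem re_centralCharge_vanishes_at_top (h : ℝ) (hh : 0 < h)
    (v w : ℝ × ℝ × ℝ) (hvw : LinearIndependent ℝ ![v, w]) (s ρ : ℝ) (hρ : 0 < ρ)
    (hW : numericalWall h v w =
      {p : ℝ × ℝ | 0 < p.1 ∧ p.1 ^ 2 + (p.2 - s) ^ 2 = ρ ^ 2}) :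
    (centralCharge h v ρ s).re = 0 ∧
      (v ≠ 0 → 0 ≤ disc h v →
        ∀ p ∈ numericalWall h v w, (centralCharge h v p.1 p.2).re = 0 → p = (ρ, s)) :=
  re_centralCharge_vanishes_at_top_general h v w s ρ hρ hW

end BridgelandNotes
end

section
/- Let R, C, D, r, c, s, ρ be real numbers with r > R ≥ 0 and ρ > 0. Assume that (i) R²·ρ² + (C² − 2·R·D) = (R·s − C)², and (ii) for every β with s − ρ < β < s + ρ one has β·r ≤ c and c ≤ C + β·(r − R). Then ρ² ≤ (C² − 2·R·D)/(4·r·(r − R)). -/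
/-!
Both inequalities of (ii) are closed conditions in `β`, so they persist at the endpoints
`s ± ρ` of the wall. Comparing `β = s + ρ` in the first with `β = s - ρ` in the second gives
`ρ (2r - R) ≤ C - R s`. Squaring, and using `(2r - R)² - R² = 4 r (r - R)` together with (i),
yields `4 r (r - R) ρ² ≤ (C - R s)² - R² ρ² = C² - 2 R D`.
-/

namespace BridgelandNotes

open Set

theorem Icc_subset_of_Ioo_subset {α : Type*} [TopologicalSpace α] [LinearOrder α]
    [OrderTopology α] [DenselyOrdered α] {a b : α} {S : Set α} (hS : IsClosed S) (hab : a ≠ b)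
    (h : Ioo a b ⊆ S) : Icc a b ⊆ S :=
  closure_Ioo hab ▸ hS.closure_subset_iff.mpr h

theorem wall_endpoints_le {R C r c s ρ : ℝ} (hρ : 0 < ρ)
    (h : ∀ β : ℝ, s - ρ < β → β < s + ρ → β * r ≤ c ∧ c ≤ C + β * (r - R)) :
    (s + ρ) * r ≤ C + (s - ρ) * (r - R) := by
  let S : Set ℝ := {β | β * r ≤ c} ∩ {β | c ≤ C + β * (r - R)}
  have hS : IsClosed S := by
    refine (isClosed_le ?_ ?_).inter (isClosed_le ?_ ?_) <;> fun_prop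
  have hIcc : Icc (s - ρ) (s + ρ) ⊆ S :=
    Icc_subset_of_Ioo_subset hS (by linarith) fun β hβ => h β hβ.1 hβ.2
  have hright := (hIcc (right_mem_Icc.mpr (by linarith))).1
  have hleft := (hIcc (left_mem_Icc.mpr (by linarith))).2
  exact hright.trans hleft

theorem sq_le_div_of_mul_le {R r ρ X : ℝ} (hR : 0 ≤ R) (hrR : R < r) (hρ : 0 ≤ ρ)
    (h : ρ * (2 * r - R) ≤ X) : ρ ^ 2 ≤ (X ^ 2 - R ^ 2 * ρ ^ 2) / (4 * r * (r - R)) := by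
  have hpos : 0 < 4 * r * (r - R) := by nlinarith
  have hsq : (ρ * (2 * r - R)) ^ 2 ≤ X ^ 2 :=
    pow_le_pow_left₀ (mul_nonneg hρ (by linarith)) h 2
  rw [le_div_iff₀ hpos]
  linear_combination hsq

/-- The numerical higher-rank wall bound: if `r > R ≥ 0`, `ρ > 0`,
`R²·ρ² + (C² − 2·R·D) = (R·s − C)²`, and for every `β` with `s − ρ < β < s + ρ` one
has `β·r ≤ c` and `c ≤ C + β·(r − R)`, then `ρ² ≤ (C² − 2·R·D)/(4·r·(r − R))`. -/
theorem higher_rank_wall_bound (R C D r c s ρ : ℝ)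
    (hrR : R < r) (hR : 0 ≤ R) (hρ : 0 < ρ)
    (h1 : R ^ 2 * ρ ^ 2 + (C ^ 2 - 2 * R * D) = (R * s - C) ^ 2)
    (h2 : ∀ β : ℝ, s - ρ < β → β < s + ρ → β * r ≤ c ∧ c ≤ C + β * (r - R)) :
    ρ ^ 2 ≤ (C ^ 2 - 2 * R * D) / (4 * r * (r - R)) := by
  have hX : ρ * (2 * r - R) ≤ C - R * s := by linarith [wall_endpoints_le hρ h2]
  have hΔ : C ^ 2 - 2 * R * D = (C - R * s) ^ 2 - R ^ 2 * ρ ^ 2 := by linear_combination h1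
  rw [hΔ]
  exact sq_le_div_of_mul_le hR hrR hρ.le hX

end BridgelandNotes
end
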